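/- arXiv:2506.09087 — 4 statements merged into one kernel-verified Lean document; each statement's English description precedes it below -/
import Mathlib

section
/- Let X be a Poisson random variable with parameter γ > 0. For any 0 ≤ x ≤ γ, P(X ≤ γ - x) ≤ exp(-x²/(2γ)). -/
/-!
Chernoff's bound at `t = -x/γ`, together with the Poisson moment generating function
`E[exp(tX)] = exp(γ(eᵗ - 1))`, gives
`P(X ≤ γ - x) ≤ exp(x(γ - x)/γ + γ(exp(-x/γ) - 1))`,
and the elementary inequality `exp(-u) ≤ 1 - u + u²/2` for `u ≥ 0` bounds this exponent
by `-x²/(2γ)`.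
-/

open MeasureTheory ProbabilityTheory Real
open scoped NNReal Nat

namespace Real

theorem exp_neg_le_one_sub_add_sq_div_two {u : ℝ} (hu : 0 ≤ u) :
    exp (-u) ≤ 1 - u + u ^ 2 / 2 := by
  let f : ℝ → ℝ := fun v ↦ 1 - v + v ^ 2 / 2 - exp (-v)
  have hf : ∀ v, HasDerivAt f (-1 + v + exp (-v)) v := fun v ↦ by
    refine ((((hasDerivAt_id v).const_sub 1).add ((hasDerivAt_pow 2 v).div_const 2)).sub
      (hasDerivAt_neg v).exp).congr_deriv ?_
    norm_num
  have hmono : MonotoneOn f (Set.Ici 0) := by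
    refine monotoneOn_of_deriv_nonneg (convex_Ici 0) (by fun_prop)
      (fun v _ ↦ (hf v).differentiableAt.differentiableWithinAt) fun v _ ↦ ?_
    rw [(hf v).deriv]
    linarith [add_one_le_exp (-v)]
  have hfu := hmono Set.self_mem_Ici hu hu
  simp only [f, neg_zero, exp_zero] at hfu
  linarith

end Real

namespace ProbabilityTheory

set_option linter.deprecated false in
theorem poissonPMF_toMeasure_eq_poissonMeasure (r : ℝ≥0) :
    (poissonPMF r).toMeasure = poissonMeasure r := by
  refine Measure.ext_of_singleton fun n ↦ ?_
  rw [PMF.toMeasure_apply_singleton _ _ (measurableSet_singleton n), poissonMeasure_singleton,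
    ← poissonPMFReal_ofReal_eq_poissonPMF, poissonPMFReal]

theorem hasSum_poissonMeasure_exp_mul (r : ℝ≥0) (t : ℝ) :
    HasSum (fun n : ℕ ↦ exp (-r) * r ^ n / n ! * exp (t * n)) (exp (r * (exp t - 1))) := by
  have h := (NormedSpace.expSeries_div_hasSum_exp ((r : ℝ) * exp t)).mul_left (exp (-r))
  rw [← exp_eq_exp_ℝ, ← exp_add, show -(r : ℝ) + r * exp t = r * (exp t - 1) by ring] at h
  refine h.congr_fun fun n ↦ ?_
  rw [mul_comm t, exp_nat_mul, mul_pow]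
  ring

theorem integrable_exp_mul_poissonMeasure (r : ℝ≥0) (t : ℝ) :
    Integrable (fun n : ℕ ↦ exp (t * n)) (poissonMeasure r) := by
  refine integrable_poissonMeasure_iff.2 ?_
  simpa only [norm_of_nonneg (exp_nonneg _)] using (hasSum_poissonMeasure_exp_mul r t).summable

theorem mgf_poissonMeasure (r : ℝ≥0) (t : ℝ) :
    mgf (fun n : ℕ ↦ (n : ℝ)) (poissonMeasure r) t = exp (r * (exp t - 1)) := by
  rw [mgf, integral_poissonMeasure' (integrable_exp_mul_poissonMeasure r t)]
  exact (hasSum_poissonMeasure_exp_mul r t).tsum_eq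

theorem poissonMeasure_real_lower_tail_le (r : ℝ≥0) (hr : 0 < r) {x : ℝ} (hx : 0 ≤ x) :
    (poissonMeasure r).real {n | (n : ℝ) ≤ r - x} ≤ exp (-x ^ 2 / (2 * r)) := by
  have hr' : (0 : ℝ) < r := hr
  have chernoff := measure_le_le_exp_mul_mgf (μ := poissonMeasure r) (r - x)
    (neg_nonpos.2 (div_nonneg hx hr'.le)) (integrable_exp_mul_poissonMeasure r _)
  rw [mgf_poissonMeasure, ← exp_add] at chernoff
  refine chernoff.trans (exp_le_exp.2 ?_)
  have hexp := exp_neg_le_one_sub_add_sq_div_two (div_nonneg hx hr'.le)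
  rw [neg_neg]
  calc x / r * (r - x) + r * (exp (-(x / r)) - 1)
      ≤ x / r * (r - x) + r * (-(x / r) + (x / r) ^ 2 / 2) := by gcongr; linarith
    _ = -x ^ 2 / (2 * r) := by field_simp; ring

end ProbabilityTheory

theorem poisson_lower_tail_general {Ω : Type*} [MeasurableSpace Ω]
    (P : Measure Ω) [IsProbabilityMeasure P]
    (γ : ℝ) (hγ : 0 < γ) (X : Ω → ℕ)
    (hX : Measure.map X P = (poissonPMF γ.toNNReal).toMeasure)
    (x : ℝ) (hx0 : 0 ≤ x) :
    P {ω | (X ω : ℝ) ≤ γ - x} ≤ ENNReal.ofReal (Real.exp (-x ^ 2 / (2 * γ))) := by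
  lift γ to ℝ≥0 using hγ.le
  rw [Real.toNNReal_coe, poissonPMF_toMeasure_eq_poissonMeasure] at hX
  have hXm : AEMeasurable X P := .of_map_ne_zero (by rw [hX]; exact IsProbabilityMeasure.ne_zero _)
  have hlaw : P {ω | (X ω : ℝ) ≤ γ - x} = poissonMeasure γ {n | (n : ℝ) ≤ γ - x} := by
    rw [← hX, Measure.map_apply_of_aemeasurable hXm .of_discrete]
    rfl
  rw [hlaw, ← ofReal_measureReal]
  exact ENNReal.ofReal_le_ofReal (poissonMeasure_real_lower_tail_le γ (mod_cast hγ) hx0)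

/-- Let `X` be a Poisson random variable with parameter `γ > 0`.
For any `0 ≤ x ≤ γ`, `P(X ≤ γ - x) ≤ exp(-x²/(2γ))`. -/
theorem poisson_lower_tail {Ω : Type*} [MeasurableSpace Ω]
    (P : Measure Ω) [IsProbabilityMeasure P]
    (γ : ℝ) (hγ : 0 < γ) (X : Ω → ℕ)
    (hX : Measure.map X P = (poissonPMF γ.toNNReal).toMeasure)
    (x : ℝ) (hx0 : 0 ≤ x) (hxγ : x ≤ γ) :
    P {ω | (X ω : ℝ) ≤ γ - x} ≤ ENNReal.ofReal (Real.exp (-x ^ 2 / (2 * γ))) :=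
  poisson_lower_tail_general P γ hγ X hX x hx0
end

section
/- Let (Π_t)_{t≥0} be a homogeneous Poisson process with rate μ > 0, let β ∈ (0,1) and let T ≥ (8/(3μ)) log(2/β). Then P(sup_{0≤t≤T} |Π_t - μt| ≥ √((8/3)μT log(2/β))) ≤ β. -/
/-!
Along a grid of mesh `Δ`, `σ (Π_{kΔ} - μ k Δ)` with `σ = ±1` is a random walk with independent
increments, so `exp (l · walk)` is a submartingale; Doob's maximal inequality and the Poisson moment
generating function `E e^{θ Π_t} = e^{μ t (e^θ - 1)}` bound the probability that the walk reaches `a`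
on `[0, T]` by `exp (μ T (e^{σ l} - 1 - σ l) - l a)`. Monotone paths move the supremum over `[0, T]`
to the grid at a cost `2 μ Δ`, which vanishes as `Δ → 0`. For the threshold
`c = √((8/3) μ T log(2/β)) ≤ μ T` take `l = 3c / (4 μ T) ≤ 3/4`: then `e^x - 1 - x ≤ 2x²/3` for
`|x| ≤ 3/4` makes both exponents at most `-log(2/β)`.
-/

open MeasureTheory ProbabilityTheory Real

/-- A homogeneous Poisson (counting) process with rate `r` under the probability
measure `P`: starts at `0`, has monotone paths, Poisson-distributed increments
`N_t - N_s ~ Poisson(r(t-s))`, and independent increments. -/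
def IsPoissonProcess {Ω : Type*} [MeasurableSpace Ω] (P : Measure Ω)
    (N : ℝ → Ω → ℕ) (r : ℝ) : Prop :=
  (∀ ω, N 0 ω = 0) ∧
  (∀ t, Measurable (N t)) ∧
  (∀ ω, Monotone fun t => N t ω) ∧
  (∀ s t : ℝ, 0 ≤ s → s ≤ t →
      Measure.map (fun ω => N t ω - N s ω) P
        = (poissonPMF (r * (t - s)).toNNReal).toMeasure) ∧
  (∀ (n : ℕ) (ts : ℕ → ℝ), Monotone ts → (∀ i, 0 ≤ ts i) →
      iIndepFun
        (fun i : Fin n => fun ω => N (ts (i + 1)) ω - N (ts i) ω) P)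

open scoped NNReal
open Filter Topology

lemma lintegral_exp_mul_poissonMeasure (r : ℝ≥0) (c : ℝ) :
    ∫⁻ k, ENNReal.ofReal (exp (c * k)) ∂poissonMeasure r =
      ENNReal.ofReal (exp (r * (exp c - 1))) := by
  have hsum : HasSum (fun k : ℕ ↦ exp (c * k) * (exp (-r) * r ^ k / k.factorial))
      (exp (r * (exp c - 1))) := by
    have h := (NormedSpace.expSeries_div_hasSum_exp (r * exp c : ℝ)).mul_left (exp (-r))
    rw [← exp_eq_exp_ℝ, ← exp_add, neg_add_eq_sub, ← mul_sub_one] at h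
    refine h.congr_fun fun k ↦ ?_
    rw [mul_comm c, exp_nat_mul, mul_pow]
    ring
  rw [lintegral_countable', ← hsum.tsum_eq,
    ENNReal.ofReal_tsum_of_nonneg (fun k ↦ by positivity) hsum.summable]
  simp_rw [poissonMeasure_singleton, ENNReal.ofReal_mul (exp_nonneg _)]

set_option linter.deprecated false in
lemma poissonPMF_toMeasure (r : ℝ≥0) : (poissonPMF r).toMeasure = poissonMeasure r := by
  refine Measure.ext_of_singleton fun k ↦ ?_
  rw [PMF.toMeasure_apply_singleton _ _ (measurableSet_singleton k), poissonMeasure_singleton,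
    ← poissonPMFReal_ofReal_eq_poissonPMF, poissonPMFReal]

lemma iIndepFun_of_forall_fin {Ω β : Type*} {mΩ : MeasurableSpace Ω} {mβ : MeasurableSpace β}
    {P : Measure Ω} {X : ℕ → Ω → β} (hX : ∀ n, iIndepFun (fun i : Fin n ↦ X i) P) :
    iIndepFun X P := by
  rw [iIndepFun_iff_finset]
  intro s
  obtain ⟨n, hn⟩ : ∃ n, ∀ i ∈ s, i < n :=
    ⟨s.sup id + 1, fun i hi ↦ Nat.lt_succ_of_le (Finset.le_sup (f := id) hi)⟩
  exact (hX n).precomp (g := fun i : s ↦ (⟨i, hn i i.2⟩ : Fin n))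
    fun i j hij ↦ Subtype.ext (congrArg Fin.val hij)

section PartialSums

variable {Ω : Type*} {mΩ : MeasurableSpace Ω} {P : Measure Ω} {Y : ℕ → Ω → ℝ}

lemma measurable_iSup_comap_sum {s : Finset ℕ} {t : Set ℕ} (hst : ↑s ⊆ t) :
    Measurable[⨆ i ∈ t, MeasurableSpace.comap (Y i) inferInstance] fun ω ↦ ∑ i ∈ s, Y i ω :=
  Finset.measurable_sum s fun i hi ↦
    (comap_measurable (Y i)).mono (le_iSup₂_of_le i (hst hi) le_rfl) le_rfl

lemma measurableSet_disjointed_le_sum_range (a : ℝ) (k : ℕ) :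
    MeasurableSet[⨆ i ∈ Set.Iio k, MeasurableSpace.comap (Y i) inferInstance]
      (disjointed (fun j ↦ {ω | a ≤ ∑ i ∈ Finset.range j, Y i ω}) k) := by
  have hS : ∀ j ≤ k, Measurable[⨆ i ∈ Set.Iio k, MeasurableSpace.comap (Y i) inferInstance]
      fun ω ↦ ∑ i ∈ Finset.range j, Y i ω := fun j hj ↦
    measurable_iSup_comap_sum fun i hi ↦ (Finset.mem_range.1 hi).trans_le hj
  rw [disjointed_eq_inter_compl]
  exact (measurableSet_le measurable_const (hS k le_rfl)).inter
    (.iInter fun j ↦ .iInter fun hj ↦ (measurableSet_le measurable_const (hS j hj.le)).compl)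

lemma lintegral_exp_mul_sum_eq_prod (hY : ∀ i, Measurable (Y i)) (hind : iIndepFun Y P)
    (l : ℝ) (s : Finset ℕ) :
    ∫⁻ ω, ENNReal.ofReal (exp (l * ∑ i ∈ s, Y i ω)) ∂P =
      ∏ i ∈ s, ∫⁻ ω, ENNReal.ofReal (exp (l * Y i ω)) ∂P := by
  have hind' : iIndepFun (fun i ω ↦ ENNReal.ofReal (exp (l * Y i ω))) P :=
    hind.comp (fun _ y ↦ ENNReal.ofReal (exp (l * y))) fun _ ↦ by fun_prop
  rw [← lintegral_prod_eq_prod_lintegral_of_indepFun s _ hind' fun i ↦ by fun_prop]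
  congr with ω
  rw [Finset.mul_sum, exp_sum, ENNReal.ofReal_prod_of_nonneg fun i _ ↦ exp_nonneg _]

lemma setLIntegral_exp_mul_sum_range_le (hY : ∀ i, Measurable (Y i)) (hind : iIndepFun Y P)
    {l : ℝ} (hmgf : ∀ i, 1 ≤ ∫⁻ ω, ENNReal.ofReal (exp (l * Y i ω)) ∂P) {k n : ℕ} (hkn : k ≤ n)
    {A : Set Ω} (hA : MeasurableSet[⨆ i ∈ Set.Iio k, MeasurableSpace.comap (Y i) inferInstance] A) :
    ∫⁻ ω in A, ENNReal.ofReal (exp (l * ∑ i ∈ Finset.range k, Y i ω)) ∂P ≤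
      ∫⁻ ω in A, ENNReal.ofReal (exp (l * ∑ i ∈ Finset.range n, Y i ω)) ∂P := by
  have hle : ∀ t : Set ℕ, ⨆ i ∈ t, MeasurableSpace.comap (Y i) inferInstance ≤ mΩ :=
    fun t ↦ iSup₂_le fun i _ ↦ (hY i).comap_le
  have hindep := indep_iSup_of_disjoint (fun i ↦ (hY i).comap_le) hind
    (Set.Iio_disjoint_Ici (a := k) le_rfl)
  have hpast : Measurable[⨆ i ∈ Set.Iio k, MeasurableSpace.comap (Y i) inferInstance]
      (A.indicator fun ω ↦ ENNReal.ofReal (exp (l * ∑ i ∈ Finset.range k, Y i ω))) :=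
    ((measurable_iSup_comap_sum (by simp)).const_mul l).exp.ennreal_ofReal.indicator hA
  have hfuture : Measurable[⨆ i ∈ Set.Ici k, MeasurableSpace.comap (Y i) inferInstance]
      fun ω ↦ ENNReal.ofReal (exp (l * ∑ i ∈ Finset.Ico k n, Y i ω)) :=
    ((measurable_iSup_comap_sum (by rw [Finset.coe_Ico]; exact Set.Ico_subset_Ici_self)).const_mul
      l).exp.ennreal_ofReal
  have hsplit : ∀ ω, ENNReal.ofReal (exp (l * ∑ i ∈ Finset.range n, Y i ω)) =
      ENNReal.ofReal (exp (l * ∑ i ∈ Finset.range k, Y i ω)) *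
        ENNReal.ofReal (exp (l * ∑ i ∈ Finset.Ico k n, Y i ω)) := fun ω ↦ by
    rw [← Finset.sum_range_add_sum_Ico _ hkn, mul_add, exp_add, ENNReal.ofReal_mul (exp_nonneg _)]
  calc ∫⁻ ω in A, ENNReal.ofReal (exp (l * ∑ i ∈ Finset.range k, Y i ω)) ∂P
      ≤ (∫⁻ ω in A, ENNReal.ofReal (exp (l * ∑ i ∈ Finset.range k, Y i ω)) ∂P) *
          ∫⁻ ω, ENNReal.ofReal (exp (l * ∑ i ∈ Finset.Ico k n, Y i ω)) ∂P := by
        rw [lintegral_exp_mul_sum_eq_prod hY hind]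
        exact le_mul_of_one_le_right' (Finset.one_le_prod' fun i _ ↦ hmgf i)
    _ = ∫⁻ ω in A, ENNReal.ofReal (exp (l * ∑ i ∈ Finset.range n, Y i ω)) ∂P := by
        rw [← lintegral_indicator (hle _ A hA), ← lintegral_indicator (hle _ A hA),
          ← lintegral_mul_eq_lintegral_mul_lintegral_of_independent_measurableSpace (hle _) (hle _)
            hindep hpast hfuture]
        congr with ω
        by_cases hω : ω ∈ A <;> simp [hω, hsplit]

/-- Doob's maximal inequality for the submartingale `exp (l * ∑ i < k, Y i)`, by splitting at the
first index where the partial sums reach `a`. -/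
theorem mul_measure_exists_le_sum_range_le (hY : ∀ i, Measurable (Y i)) (hind : iIndepFun Y P)
    {l : ℝ} (hl : 0 ≤ l) (hmgf : ∀ i, 1 ≤ ∫⁻ ω, ENNReal.ofReal (exp (l * Y i ω)) ∂P)
    (a : ℝ) (n : ℕ) :
    ENNReal.ofReal (exp (l * a)) * P {ω | ∃ k ≤ n, a ≤ ∑ i ∈ Finset.range k, Y i ω} ≤
      ∏ i ∈ Finset.range n, ∫⁻ ω, ENNReal.ofReal (exp (l * Y i ω)) ∂P := by
  set B : ℕ → Set Ω := fun k ↦ {ω | a ≤ ∑ i ∈ Finset.range k, Y i ω}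
  have hunion : {ω | ∃ k ≤ n, a ≤ ∑ i ∈ Finset.range k, Y i ω} =
      ⋃ k ∈ Finset.range (n + 1), disjointed B k := by
    rw [biUnion_range_succ_disjointed]
    ext ω
    simp [B, partialSups_eq_biSup]
  have hA : ∀ k, MeasurableSet[⨆ i ∈ Set.Iio k, MeasurableSpace.comap (Y i) inferInstance]
      (disjointed B k) := measurableSet_disjointed_le_sum_range a
  have hA' : ∀ k, MeasurableSet (disjointed B k) := fun k ↦
    (iSup₂_le fun i _ ↦ (hY i).comap_le : _ ≤ mΩ) _ (hA k)
  calc ENNReal.ofReal (exp (l * a)) * P {ω | ∃ k ≤ n, a ≤ ∑ i ∈ Finset.range k, Y i ω}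
      ≤ ∑ k ∈ Finset.range (n + 1), ENNReal.ofReal (exp (l * a)) * P (disjointed B k) := by
        rw [hunion, ← Finset.mul_sum]
        gcongr
        exact measure_biUnion_finset_le _ _
    _ ≤ ∑ k ∈ Finset.range (n + 1),
          ∫⁻ ω in disjointed B k, ENNReal.ofReal (exp (l * ∑ i ∈ Finset.range k, Y i ω)) ∂P := by
        gcongr with k
        rw [← setLIntegral_const]
        refine setLIntegral_mono (by fun_prop) fun ω hω ↦ ?_
        gcongr
        exact disjointed_subset B k hω
    _ ≤ ∑ k ∈ Finset.range (n + 1),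
          ∫⁻ ω in disjointed B k, ENNReal.ofReal (exp (l * ∑ i ∈ Finset.range n, Y i ω)) ∂P :=
        Finset.sum_le_sum fun k hk ↦ setLIntegral_exp_mul_sum_range_le hY hind hmgf
          (Nat.lt_succ_iff.1 (Finset.mem_range.1 hk)) (hA k)
    _ = ∫⁻ ω in ⋃ k ∈ Finset.range (n + 1), disjointed B k,
          ENNReal.ofReal (exp (l * ∑ i ∈ Finset.range n, Y i ω)) ∂P :=
        (lintegral_biUnion_finset ((disjoint_disjointed B).set_pairwise _) (fun k _ ↦ hA' k) _).symm
    _ ≤ ∫⁻ ω, ENNReal.ofReal (exp (l * ∑ i ∈ Finset.range n, Y i ω)) ∂P :=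
        setLIntegral_le_lintegral _ _
    _ = ∏ i ∈ Finset.range n, ∫⁻ ω, ENNReal.ofReal (exp (l * Y i ω)) ∂P :=
        lintegral_exp_mul_sum_eq_prod hY hind l _

end PartialSums

lemma exp_sub_one_sub_le_two_thirds_mul_sq {x : ℝ} (hx : |x| ≤ 3 / 4) :
    exp x - 1 - x ≤ 2 / 3 * x ^ 2 := by
  have h := (abs_le.1 (Real.exp_bound (x := x) (by linarith) (n := 3) (by norm_num))).2
  have hx3 : |x| ^ 3 ≤ 3 / 4 * x ^ 2 := by
    rw [pow_succ', ← sq_abs x]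
    exact mul_le_mul_of_nonneg_right hx (sq_nonneg _)
  simp only [Finset.sum_range_succ, Finset.sum_range_zero, Nat.factorial] at h
  norm_num at h
  nlinarith

lemma Monotone.exists_grid_sub_le {f : ℝ → ℝ} (hf : Monotone f) {μ Δ : ℝ} (hμ : 0 ≤ μ)
    (hΔ : 0 < Δ) {n : ℕ} {t : ℝ} (ht : t ∈ Set.Icc 0 (n * Δ)) :
    (∃ k ≤ n, f t - μ * t - μ * Δ ≤ f (k * Δ) - μ * (k * Δ)) ∧
      ∃ k ≤ n, -(f t - μ * t) - μ * Δ ≤ -(f (k * Δ) - μ * (k * Δ)) := by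
  have htΔ : 0 ≤ t / Δ := div_nonneg ht.1 hΔ.le
  constructor
  · refine ⟨⌈t / Δ⌉₊, Nat.ceil_le.2 ((div_le_iff₀ hΔ).2 ht.2), ?_⟩
    have h₁ : t ≤ ⌈t / Δ⌉₊ * Δ := (div_le_iff₀ hΔ).1 (Nat.le_ceil _)
    have h₂ : ⌈t / Δ⌉₊ * Δ < t + Δ := by
      calc _ < (t / Δ + 1) * Δ := mul_lt_mul_of_pos_right (Nat.ceil_lt_add_one htΔ) hΔ
        _ = t + Δ := by field_simp
    nlinarith [hf h₁]
  · refine ⟨⌊t / Δ⌋₊, Nat.floor_le_of_le ((div_le_iff₀ hΔ).2 ht.2), ?_⟩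
    have h₁ : ⌊t / Δ⌋₊ * Δ ≤ t := (le_div_iff₀ hΔ).1 (Nat.floor_le htΔ)
    have h₂ : t < ⌊t / Δ⌋₊ * Δ + Δ := by
      calc t = t / Δ * Δ := by field_simp
        _ < (⌊t / Δ⌋₊ + 1) * Δ := mul_lt_mul_of_pos_right (Nat.lt_floor_add_one _) hΔ
        _ = _ := by ring
    nlinarith [hf h₁]

lemma chernoff_exponent_le_of_sq_eq {u c L x : ℝ} (hu : 0 < u) (hc : c ^ 2 = 8 / 3 * u * L)
    (hcu : c ≤ u) (hx : |x| = 3 * c / (4 * u)) :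
    u * (exp x - 1 - x) - |x| * c ≤ -L := by
  have hx34 : |x| ≤ 3 / 4 := by
    rw [hx, div_le_iff₀ (by positivity)]
    linarith
  have hux : u * |x| = 3 / 4 * c := by
    rw [hx]
    field_simp
  have hxc : |x| * c = 2 * L := by
    rw [hx]
    field_simp
    linear_combination 3 * hc
  have h := mul_le_mul_of_nonneg_left (exp_sub_one_sub_le_two_thirds_mul_sq hx34) hu.le
  rw [← sq_abs] at h
  linear_combination h + (2 / 3 * |x|) * hux - 1 / 2 * hxc

namespace IsPoissonProcess

variable {Ω : Type*} {mΩ : MeasurableSpace Ω} {P : Measure Ω} {N : ℝ → Ω → ℕ} {μ : ℝ}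

lemma iIndepFun_increments (hN : IsPoissonProcess P N μ) {ts : ℕ → ℝ} (hts : Monotone ts)
    (hts0 : ∀ i, 0 ≤ ts i) : iIndepFun (fun i ω ↦ N (ts (i + 1)) ω - N (ts i) ω) P :=
  iIndepFun_of_forall_fin fun n ↦ hN.2.2.2.2 n ts hts hts0

lemma lintegral_exp_mul_increment (hN : IsPoissonProcess P N μ) (hμ : 0 ≤ μ) {s t : ℝ}
    (hs : 0 ≤ s) (hst : s ≤ t) (c : ℝ) :
    ∫⁻ ω, ENNReal.ofReal (exp (c * ((N t ω - N s ω : ℕ) : ℝ))) ∂P =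
      ENNReal.ofReal (exp (μ * (t - s) * (exp c - 1))) := by
  have hmeas : Measurable fun ω ↦ N t ω - N s ω := (hN.2.1 t).sub (hN.2.1 s)
  rw [← lintegral_map (f := fun k : ℕ ↦ ENNReal.ofReal (exp (c * k))) (by fun_prop) hmeas,
    hN.2.2.2.1 s t hs hst, poissonPMF_toMeasure, lintegral_exp_mul_poissonMeasure,
    Real.coe_toNNReal _ (by nlinarith)]

lemma lintegral_exp_mul_centered_increment (hN : IsPoissonProcess P N μ) (hμ : 0 ≤ μ)
    {s t : ℝ} (hs : 0 ≤ s) (hst : s ≤ t) (θ : ℝ) :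
    ∫⁻ ω, ENNReal.ofReal (exp (θ * (((N t ω - N s ω : ℕ) : ℝ) - μ * (t - s)))) ∂P =
      ENNReal.ofReal (exp (μ * (t - s) * (exp θ - 1 - θ))) := by
  have hsplit : ∀ ω, ENNReal.ofReal (exp (θ * (((N t ω - N s ω : ℕ) : ℝ) - μ * (t - s)))) =
      ENNReal.ofReal (exp (-(θ * (μ * (t - s))))) *
        ENNReal.ofReal (exp (θ * ((N t ω - N s ω : ℕ) : ℝ))) := fun ω ↦ by
    rw [← ENNReal.ofReal_mul (exp_nonneg _), ← exp_add]
    ring_nf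
  have hmeas : Measurable fun ω ↦ N t ω - N s ω := (hN.2.1 t).sub (hN.2.1 s)
  rw [lintegral_congr hsplit, lintegral_const_mul _ (by fun_prop),
    hN.lintegral_exp_mul_increment hμ hs hst, ← ENNReal.ofReal_mul (exp_nonneg _), ← exp_add]
  ring_nf

lemma measure_exists_grid_le_le (hN : IsPoissonProcess P N μ) (hμ : 0 ≤ μ) {Δ : ℝ} (hΔ : 0 ≤ Δ)
    (σ a : ℝ) {l : ℝ} (hl : 0 ≤ l) (n : ℕ) :
    P {ω | ∃ k ≤ n, a ≤ σ * ((N (k * Δ) ω : ℝ) - μ * (k * Δ))} ≤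
      ENNReal.ofReal (exp (μ * (n * Δ) * (exp (σ * l) - 1 - σ * l) - l * a)) := by
  have hstep : ∀ i : ℕ, ((i + 1 : ℕ) : ℝ) * Δ - i * Δ = Δ := fun i ↦ by push_cast; ring
  set Y : ℕ → Ω → ℝ := fun i ω ↦ σ * (((N ((i + 1 : ℕ) * Δ) ω - N (i * Δ) ω : ℕ) : ℝ) - μ * Δ)
  have hY : ∀ i, Measurable (Y i) := fun i ↦ by
    have hNmeas := hN.2.1
    fun_prop
  have hind : iIndepFun Y P :=
    (hN.iIndepFun_increments (ts := fun j ↦ j * Δ) (fun i j hij ↦ by dsimp only; gcongr)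
      fun i ↦ by positivity).comp (fun _ k ↦ σ * ((k : ℝ) - μ * Δ)) fun _ ↦ by fun_prop
  have hsum : ∀ k ω, ∑ i ∈ Finset.range k, Y i ω = σ * ((N (k * Δ) ω : ℝ) - μ * (k * Δ)) := by
    intro k ω
    have hcast : ∀ i : ℕ, ((N ((i + 1 : ℕ) * Δ) ω - N (i * Δ) ω : ℕ) : ℝ) =
        N ((i + 1 : ℕ) * Δ) ω - N (i * Δ) ω := fun i ↦ Nat.cast_sub (hN.2.2.1 ω (by gcongr; simp))
    simp only [Y, hcast, ← Finset.mul_sum, Finset.sum_sub_distrib,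
      Finset.sum_range_sub fun i : ℕ ↦ (N (i * Δ) ω : ℝ), Finset.sum_const, Finset.card_range,
      nsmul_eq_mul]
    simp [hN.1]
  have hmgf : ∀ i, ∫⁻ ω, ENNReal.ofReal (exp (l * Y i ω)) ∂P =
      ENNReal.ofReal (exp (μ * Δ * (exp (σ * l) - 1 - σ * l))) := fun i ↦ by
    have h := hN.lintegral_exp_mul_centered_increment hμ (s := i * Δ) (t := (i + 1 : ℕ) * Δ)
      (by positivity) (by gcongr; simp) (σ * l)
    rw [hstep] at h
    refine (lintegral_congr fun ω ↦ ?_).trans h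
    simp only [Y]
    ring_nf
  have hmgf_ge : 1 ≤ ENNReal.ofReal (exp (μ * Δ * (exp (σ * l) - 1 - σ * l))) := by
    rw [ENNReal.one_le_ofReal]
    exact one_le_exp (mul_nonneg (mul_nonneg hμ hΔ) (by linarith [add_one_le_exp (σ * l)]))
  have hmax := mul_measure_exists_le_sum_range_le hY hind hl (fun i ↦ (hmgf i).symm ▸ hmgf_ge) a n
  simp only [hsum, hmgf, Finset.prod_const, Finset.card_range] at hmax
  rw [ENNReal.mul_le_iff_le_inv (by positivity) ENNReal.ofReal_ne_top,
    ← ENNReal.ofReal_inv_of_pos (exp_pos _), ← exp_neg, ← ENNReal.ofReal_pow (exp_nonneg _),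
    ← exp_nat_mul, ← ENNReal.ofReal_mul (exp_nonneg _), ← exp_add] at hmax
  refine hmax.trans_eq ?_
  ring_nf

lemma measure_le_sSup_abs_sub_le_grid (hN : IsPoissonProcess P N μ) (hμ : 0 < μ) {T : ℝ}
    (hT : 0 < T) {l : ℝ} (hl : 0 ≤ l) (c : ℝ) {n : ℕ} (hn : 0 < n) :
    P {ω | c ≤ sSup ((fun t ↦ |(N t ω : ℝ) - μ * t|) '' Set.Icc 0 T)} ≤
      ENNReal.ofReal (exp (μ * T * (exp l - 1 - l) - l * (c - 2 * μ * T / n))) +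
        ENNReal.ofReal (exp (μ * T * (exp (-l) - 1 + l) - l * (c - 2 * μ * T / n))) := by
  set Δ := T / n
  have hΔ : 0 < Δ := by positivity
  have hnΔ : n * Δ = T := by
    simp only [Δ]
    field_simp
  have hslack : 2 * μ * T / n = 2 * (μ * Δ) := by ring
  set E : ℝ → Set Ω := fun σ ↦
    {ω | ∃ k ≤ n, c - 2 * μ * T / n ≤ σ * ((N (k * Δ) ω : ℝ) - μ * (k * Δ))}
  have hsub : {ω | c ≤ sSup ((fun t ↦ |(N t ω : ℝ) - μ * t|) '' Set.Icc 0 T)} ⊆ E 1 ∪ E (-1) := by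
    intro ω hω
    obtain ⟨_, ⟨t, ht, rfl⟩, hlt⟩ := exists_lt_of_lt_csSup ((Set.nonempty_Icc.2 hT.le).image _)
      (show c - μ * Δ < _ from lt_of_lt_of_le (by nlinarith) hω)
    rw [← hnΔ] at ht
    obtain ⟨⟨k₁, hk₁, h₁⟩, ⟨k₂, hk₂, h₂⟩⟩ :=
      (Nat.mono_cast.comp (hN.2.2.1 ω)).exists_grid_sub_le hμ.le hΔ ht
    rcases lt_abs.1 hlt with h | h
    · exact Or.inl ⟨k₁, hk₁, by simp only [Function.comp_apply] at h₁; linarith⟩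
    · exact Or.inr ⟨k₂, hk₂, by simp only [Function.comp_apply] at h₂; linarith⟩
  have hup := hN.measure_exists_grid_le_le hμ.le hΔ.le 1 (c - 2 * μ * T / n) hl n
  have hdown := hN.measure_exists_grid_le_le hμ.le hΔ.le (-1) (c - 2 * μ * T / n) hl n
  simp only [one_mul, neg_one_mul, sub_neg_eq_add, hnΔ] at hup hdown
  calc _ ≤ P (E 1 ∪ E (-1)) := measure_mono hsub
    _ ≤ P (E 1) + P (E (-1)) := measure_union_le _ _
    _ ≤ _ := add_le_add (by simpa [E] using hup) (by simpa [E] using hdown)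

theorem measure_le_sSup_abs_sub_le (hN : IsPoissonProcess P N μ) (hμ : 0 < μ) {T : ℝ}
    (hT : 0 < T) {l : ℝ} (hl : 0 ≤ l) (c : ℝ) :
    P {ω | c ≤ sSup ((fun t ↦ |(N t ω : ℝ) - μ * t|) '' Set.Icc 0 T)} ≤
      ENNReal.ofReal (exp (μ * T * (exp l - 1 - l) - l * c)) +
        ENNReal.ofReal (exp (μ * T * (exp (-l) - 1 + l) - l * c)) := by
  have hterm : ∀ A : ℝ, Tendsto (fun n : ℕ ↦ ENNReal.ofReal (exp (A - l * (c - 2 * μ * T / n))))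
      atTop (𝓝 (ENNReal.ofReal (exp (A - l * c)))) := fun A ↦ by
    have h := ((continuous_exp.comp (by fun_prop : Continuous fun x : ℝ ↦ A - l * (c - x))).tendsto
      0).comp (tendsto_const_div_atTop_nhds_zero_nat (2 * μ * T))
    simpa using ENNReal.tendsto_ofReal h
  exact ge_of_tendsto ((hterm _).add (hterm _)) (eventually_gt_atTop 0 |>.mono
    fun n hn ↦ hN.measure_le_sSup_abs_sub_le_grid hμ hT hl c hn)

end IsPoissonProcess

theorem poisson_process_sup_two_sided_general {Ω : Type*} [MeasurableSpace Ω]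
    (P : Measure Ω)
    (μ : ℝ) (hμ : 0 < μ) (N : ℝ → Ω → ℕ) (hN : IsPoissonProcess P N μ)
    (β T : ℝ) (hβ : β ∈ Set.Ioo (0 : ℝ) 1)
    (hT : 8 / (3 * μ) * Real.log (2 / β) ≤ T) :
    P {ω | Real.sqrt (8 / 3 * μ * T * Real.log (2 / β)) ≤
            sSup ((fun t => |(N t ω : ℝ) - μ * t|) '' Set.Icc 0 T)} ≤
      ENNReal.ofReal β := by
  obtain ⟨hβ0, hβ1⟩ := hβ
  have hL : 0 < log (2 / β) := log_pos (by rw [lt_div_iff₀ hβ0]; linarith)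
  have hT0 : 0 < T := lt_of_lt_of_le (by positivity) hT
  have hLT : log (2 / β) ≤ 3 / 8 * (μ * T) := by
    rw [div_mul_eq_mul_div, div_le_iff₀ (by positivity)] at hT
    linarith
  set c := sqrt (8 / 3 * μ * T * log (2 / β))
  have hc : c ^ 2 = 8 / 3 * μ * T * log (2 / β) := sq_sqrt (by positivity)
  have hcT : c ≤ μ * T := by nlinarith [sqrt_nonneg (8 / 3 * μ * T * log (2 / β))]
  set l := 3 * c / (4 * (μ * T))
  have hl : 0 ≤ l := by positivity
  have hterm : ∀ x, |x| = l → exp (μ * T * (exp x - 1 - x) - l * c) ≤ β / 2 := by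
    intro x hx
    have h := chernoff_exponent_le_of_sq_eq (L := log (2 / β)) (by positivity)
      (by rw [hc]; ring) hcT hx
    rw [hx] at h
    calc _ ≤ exp (-log (2 / β)) := by gcongr
      _ = _ := by rw [exp_neg, exp_log (by positivity), inv_div]
  calc _ ≤ _ := hN.measure_le_sSup_abs_sub_le hμ hT0 hl c
    _ ≤ ENNReal.ofReal (β / 2) + ENNReal.ofReal (β / 2) := by
        gcongr
        · exact hterm l (abs_of_nonneg hl)
        · simpa using hterm (-l) (by rw [abs_neg, abs_of_nonneg hl])
    _ = ENNReal.ofReal β := by rw [← ENNReal.ofReal_add (by positivity) (by positivity), add_halves]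

/-- For a homogeneous Poisson process of rate `μ > 0`,
`β ∈ (0,1)` and `T ≥ (8/(3μ)) log(2/β)`,
`P(sup_{0≤t≤T} |Π_t - μt| ≥ √((8/3)μT log(2/β))) ≤ β`. -/
theorem poisson_process_sup_two_sided {Ω : Type*} [MeasurableSpace Ω]
    (P : Measure Ω) [IsProbabilityMeasure P]
    (μ : ℝ) (hμ : 0 < μ) (N : ℝ → Ω → ℕ) (hN : IsPoissonProcess P N μ)
    (β T : ℝ) (hβ : β ∈ Set.Ioo (0 : ℝ) 1)
    (hT : 8 / (3 * μ) * Real.log (2 / β) ≤ T) :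
    P {ω | Real.sqrt (8 / 3 * μ * T * Real.log (2 / β)) ≤
            sSup ((fun t => |(N t ω : ℝ) - μ * t|) '' Set.Icc 0 T)} ≤
      ENNReal.ofReal β :=
  poisson_process_sup_two_sided_general P μ hμ N hN β T hβ hT
end

section
/- Let (B_t)_{t≥0} be a standard Brownian motion. For all y > 0, P(sup_{t≥0} |B_t| / √((t+1)(log(t+1) + 2y)) ≥ 1) ≤ e^{-y}. -/
open MeasureTheory ProbabilityTheory Real

/-- A standard one-dimensional Brownian motion under the probability measure `P`:
starts at `0`, has continuous paths, Gaussian increments `B_t - B_s ~ N(0, t-s)`,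
and independent increments. -/
def IsStdBrownian {Ω : Type*} [MeasurableSpace Ω] (P : Measure Ω)
    (B : ℝ → Ω → ℝ) : Prop :=
  (∀ ω, B 0 ω = 0) ∧
  (∀ t, Measurable (B t)) ∧
  (∀ ω, Continuous fun t => B t ω) ∧
  (∀ s t : ℝ, 0 ≤ s → s ≤ t →
      Measure.map (fun ω => B t ω - B s ω) P = gaussianReal 0 (t - s).toNNReal) ∧
  (∀ (n : ℕ) (ts : ℕ → ℝ), Monotone ts → (∀ i, 0 ≤ ts i) →
      iIndepFun
        (fun i : Fin n => fun ω => B (ts (i + 1)) ω - B (ts i) ω) P)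


open scoped ENNReal Topology
open Filter

/-!
Mixing the exponential martingales `exp (θ B_t - θ² t / 2)` over `θ ~ N(0, 1/c)` gives the
nonnegative martingale `M_t = √(c / (t + c)) exp (B_t² / (2 (t + c)))` with `M_0 = 1`, so Doob's
maximal inequality on dyadic times and path continuity give Ville's inequality
`P (∃ t ≥ 0, M_t ≥ λ) ≤ 1 / λ`. For `c = 1`, `|B_t| ≥ √((t + 1) (log (t + 1) + 2 y))` forces
`M_t ≥ e^y`. The supremum in the statement need not be attained, but the same inequality and
Borel–Cantelli show that almost surely the ratio is eventually at most `1 / 2`, so a supremum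
`≥ 1` is attained on a compact interval.
-/

lemma neg_mul_sq_add_mul_eq {a : ℝ} (ha : a ≠ 0) (b x : ℝ) :
    -a * x ^ 2 + b * x = -a * (x - b / (2 * a)) ^ 2 + b ^ 2 / (4 * a) := by
  field_simp; ring

lemma integral_exp_neg_mul_sq_add_mul {a : ℝ} (ha : 0 < a) (b : ℝ) :
    ∫ x, exp (-a * x ^ 2 + b * x) = √(π / a) * exp (b ^ 2 / (4 * a)) := by
  simp_rw [neg_mul_sq_add_mul_eq ha.ne' b, exp_add, integral_mul_const,
    integral_sub_right_eq_self (fun x => exp (-a * x ^ 2)), integral_gaussian]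

lemma integrable_exp_neg_mul_sq_add_mul {a : ℝ} (ha : 0 < a) (b : ℝ) :
    Integrable fun x => exp (-a * x ^ 2 + b * x) := by
  simp_rw [neg_mul_sq_add_mul_eq ha.ne' b, exp_add]
  exact ((integrable_exp_neg_mul_sq ha).comp_sub_right _).mul_const _

lemma lintegral_exp_sq_gaussianReal {v a : ℝ} (hv : 0 < v) (hva : v < a) (b : ℝ) :
    ∫⁻ x, ENNReal.ofReal (exp ((b + x) ^ 2 / (2 * a))) ∂gaussianReal 0 v.toNNReal
      = ENNReal.ofReal (√(a / (a - v)) * exp (b ^ 2 / (2 * (a - v)))) := by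
  have ha : 0 < a := hv.trans hva
  have hav : 0 < a - v := sub_pos.2 hva
  set α := (a - v) / (2 * a * v) with hα_def
  have hα : 0 < α := by positivity
  have hdens : ∀ x, gaussianPDF 0 v.toNNReal x * ENNReal.ofReal (exp ((b + x) ^ 2 / (2 * a)))
      = ENNReal.ofReal ((√(2 * π * v))⁻¹ * exp (b ^ 2 / (2 * a)) *
          exp (-α * x ^ 2 + b / a * x)) := by
    intro x
    rw [gaussianPDF, gaussianPDFReal, Real.coe_toNNReal v hv.le,
      ← ENNReal.ofReal_mul (by positivity), mul_assoc, ← exp_add,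
      mul_assoc _ (exp (b ^ 2 / (2 * a))), ← exp_add, hα_def]
    congr 3
    field_simp
    ring
  rw [gaussianReal_of_var_ne_zero 0 (by simpa using hv),
    lintegral_withDensity_eq_lintegral_mul _ (measurable_gaussianPDF 0 _) (by fun_prop)]
  simp_rw [Pi.mul_apply, hdens]
  rw [← ofReal_integral_eq_lintegral_ofReal
      ((integrable_exp_neg_mul_sq_add_mul hα _).const_mul _) (ae_of_all _ fun x => by positivity),
    integral_const_mul, integral_exp_neg_mul_sq_add_mul hα]
  congr 1
  calc (√(2 * π * v))⁻¹ * exp (b ^ 2 / (2 * a)) * (√(π / α) * exp ((b / a) ^ 2 / (4 * α)))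
      = √((2 * π * v)⁻¹ * (π / α)) * exp (b ^ 2 / (2 * a) + (b / a) ^ 2 / (4 * α)) := by
        rw [sqrt_mul (by positivity : (0 : ℝ) ≤ (2 * π * v)⁻¹) (π / α), sqrt_inv, exp_add]; ring
    _ = √(a / (a - v)) * exp (b ^ 2 / (2 * (a - v))) := by
        rw [hα_def]
        congr 2
        · field_simp
        · field_simp; ring

/-- The mixture `∫ exp (θ x - θ ^ 2 t / 2) dN(0, 1/c)(θ)` of the exponential martingales of
Brownian motion, written in closed form. -/
noncomputable def robbinsMixture (c t x : ℝ) : ℝ :=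
  √(c / (t + c)) * exp (x ^ 2 / (2 * (t + c)))

@[fun_prop]
lemma measurable_robbinsMixture (c t : ℝ) : Measurable (robbinsMixture c t) := by
  unfold robbinsMixture; fun_prop

lemma robbinsMixture_nonneg (c t x : ℝ) : 0 ≤ robbinsMixture c t x := by
  unfold robbinsMixture; positivity

lemma robbinsMixture_zero_zero {c : ℝ} (hc : 0 < c) : robbinsMixture c 0 0 = 1 := by
  simp [robbinsMixture, hc.ne']

lemma continuousAt_robbinsMixture {c t : ℝ} {f : ℝ → ℝ} (hf : Continuous f) (ht : 0 < t + c) :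
    ContinuousAt (fun s => robbinsMixture c s (f s)) t := by
  unfold robbinsMixture
  fun_prop (disch := positivity)

lemma lintegral_robbinsMixture_add_gaussianReal {c s t : ℝ} (hc : 0 < c) (hs : 0 ≤ s)
    (hst : s ≤ t) (b : ℝ) :
    ∫⁻ x, ENNReal.ofReal (robbinsMixture c t (b + x)) ∂gaussianReal 0 (t - s).toNNReal
      = ENNReal.ofReal (robbinsMixture c s b) := by
  rcases hst.eq_or_lt with rfl | hst
  · simp [gaussianReal_zero_var, lintegral_dirac]
  have hsc : 0 < s + c := by linarith
  have htc : 0 < t + c := by linarith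
  simp_rw [robbinsMixture, ENNReal.ofReal_mul (sqrt_nonneg _)]
  rw [lintegral_const_mul _ (by fun_prop),
    lintegral_exp_sq_gaussianReal (by linarith) (by linarith : t - s < t + c),
    ← ENNReal.ofReal_mul (sqrt_nonneg _), ← mul_assoc, ← sqrt_mul (by positivity),
    show t + c - (t - s) = s + c by ring, ENNReal.ofReal_mul (sqrt_nonneg _)]
  congr 3
  field_simp

lemma ProbabilityTheory.IndepFun.lintegral_eq_lintegral_lintegral_map {Ω α β : Type*}
    [MeasurableSpace Ω] [MeasurableSpace α] [MeasurableSpace β] {P : Measure Ω}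
    [IsFiniteMeasure P] {X : Ω → α} {Y : Ω → β} (hXY : IndepFun X Y P) (hX : Measurable X)
    (hY : Measurable Y) {H : α → β → ℝ≥0∞} (hH : Measurable (Function.uncurry H)) :
    ∫⁻ ω, H (X ω) (Y ω) ∂P = ∫⁻ ω, ∫⁻ y, H (X ω) y ∂(P.map Y) ∂P := by
  calc ∫⁻ ω, H (X ω) (Y ω) ∂P
      = ∫⁻ p, Function.uncurry H p ∂(P.map fun ω => (X ω, Y ω)) :=
        (lintegral_map hH (hX.prodMk hY)).symm
    _ = ∫⁻ x, ∫⁻ y, H x y ∂(P.map Y) ∂(P.map X) := by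
        rw [(indepFun_iff_map_prod_eq_prod_map_map hX.aemeasurable hY.aemeasurable).1 hXY,
          lintegral_prod _ hH.aemeasurable]
        rfl
    _ = ∫⁻ ω, ∫⁻ y, H (X ω) y ∂(P.map Y) ∂P := lintegral_map hH.lintegral_prod_right' hX

lemma setLIntegral_comp_add_of_indep {Ω : Type*} {m : MeasurableSpace Ω} [mΩ : MeasurableSpace Ω]
    {P : Measure Ω} [IsFiniteMeasure P] {Z Δ : Ω → ℝ}
    (hZ : Measurable[m] Z) (hΔ : Measurable Δ) (hm : m ≤ mΩ)
    (hind : Indep m (MeasurableSpace.comap Δ inferInstance) P) {g : ℝ → ℝ≥0∞}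
    (hg : Measurable g) {s : Set Ω} (hs : MeasurableSet[m] s) :
    ∫⁻ ω in s, g (Z ω + Δ ω) ∂P = ∫⁻ ω in s, ∫⁻ x, g (Z ω + x) ∂(P.map Δ) ∂P := by
  set W : Ω → ℝ≥0∞ × ℝ := fun ω => (s.indicator 1 ω, Z ω)
  have hWm : Measurable[m] W := (Measurable.indicator (m := m) measurable_const hs).prodMk hZ
  have hW : IndepFun W Δ P := indep_of_indep_of_le_left hind hWm.comap_le
  have hind_mul : ∀ f : Ω → ℝ≥0∞, s.indicator f = fun ω => (W ω).1 * f ω := by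
    intro f; ext ω; by_cases h : ω ∈ s <;> simp [W, h]
  rw [← lintegral_indicator (hm s hs), ← lintegral_indicator (hm s hs), hind_mul, hind_mul,
    hW.lintegral_eq_lintegral_lintegral_map (hWm.mono hm le_rfl) hΔ
      (H := fun w x => w.1 * g (w.2 + x))
      (measurable_fst.fst.mul (hg.comp (measurable_fst.snd.add measurable_snd)))]
  refine lintegral_congr fun ω => ?_
  exact lintegral_const_mul _ (hg.comp (measurable_const.add measurable_id))

lemma exists_dyadic_of_eventually {t : ℝ} (ht : 0 ≤ t) {p : ℝ → Prop} (hp : ∀ᶠ s in 𝓝 t, p s) :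
    ∃ n k : ℕ, k ≤ 4 ^ n ∧ p (k / 2 ^ n) := by
  obtain ⟨δ, hδ, hball⟩ := Metric.eventually_nhds_iff.1 hp
  obtain ⟨n, hn⟩ := pow_unbounded_of_one_lt (t + 1 + δ⁻¹) (one_lt_two (α := ℝ))
  have h2n : (0 : ℝ) < 2 ^ n := by positivity
  set k := ⌊t * 2 ^ n⌋₊ + 1
  have hk_lo : t * 2 ^ n < k := by simpa [k] using Nat.lt_floor_add_one (t * 2 ^ n)
  have hk_hi : (k : ℝ) ≤ t * 2 ^ n + 1 := by
    simpa [k] using Nat.floor_le (by positivity : 0 ≤ t * 2 ^ n)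
  have hδn : 1 < δ * 2 ^ n := by
    have := (inv_lt_iff_one_lt_mul₀' hδ).1 (show δ⁻¹ < 2 ^ n by linarith)
    linarith
  have ht2n : t + 1 ≤ 2 ^ n := by linarith [inv_pos.2 hδ]
  have h1 : t < k / 2 ^ n := (lt_div_iff₀ h2n).2 hk_lo
  have h2 : k / 2 ^ n < t + δ := (div_lt_iff₀ h2n).2 (by nlinarith)
  refine ⟨n, k, ?_, hball ?_⟩
  · have : (k : ℝ) ≤ 4 ^ n := by
      rw [show (4 : ℝ) ^ n = 2 ^ n * 2 ^ n by rw [← mul_pow]; norm_num]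
      nlinarith
    exact_mod_cast this
  · rw [Real.dist_eq, abs_of_pos (sub_pos.2 h1)]
    linarith

lemma sq_mul_le_sq_of_le_abs_div_sqrt {a b D : ℝ} (ha : 0 ≤ a) (h : a ≤ |b| / √D) :
    a ^ 2 * D ≤ b ^ 2 := by
  rcases le_or_gt D 0 with hD | hD
  · nlinarith [sq_nonneg a, sq_nonneg b]
  have h' : a * √D ≤ |b| := (le_div_iff₀ (sqrt_pos.2 hD)).1 h
  calc a ^ 2 * D = (a * √D) ^ 2 := by rw [mul_pow, sq_sqrt hD.le]
    _ ≤ |b| ^ 2 := pow_le_pow_left₀ (by positivity) h' 2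
    _ = b ^ 2 := sq_abs b

lemma exp_le_robbinsMixture_one {t y b : ℝ} (ht : 0 ≤ t)
    (h : (t + 1) * (log (t + 1) + 2 * y) ≤ b ^ 2) : exp y ≤ robbinsMixture 1 t b := by
  have ht1 : 0 < t + 1 := by linarith
  calc exp y = √(1 / (t + 1)) * exp ((log (t + 1) + 2 * y) / 2) := by
        rw [add_div, exp_add, ← log_sqrt ht1.le, exp_log (sqrt_pos.2 ht1), ← mul_assoc,
          ← sqrt_mul (by positivity), one_div, inv_mul_cancel₀ ht1.ne', sqrt_one, one_mul]
        ring_nf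
    _ ≤ robbinsMixture 1 t b := by
        refine mul_le_mul_of_nonneg_left (exp_le_exp.2 ?_) (sqrt_nonneg _)
        rw [div_le_div_iff₀ two_pos (by positivity)]
        nlinarith

lemma exp_div_sqrt_three_le_robbinsMixture {T t y b : ℝ} (hT : 1 ≤ T) (hTt : T ≤ t)
    (htT : t ≤ 2 * T) (hy : 0 ≤ y) (h : (t + 1) * (log (t + 1) + 2 * y) / 4 ≤ b ^ 2) :
    exp (log T / 16) / √3 ≤ robbinsMixture T t b := by
  have hlogT : 0 ≤ log T := log_nonneg hT
  have hlog : log T ≤ log (t + 1) := log_le_log (by linarith) (by linarith)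
  have hsqrt : 1 / √3 ≤ √(T / (t + T)) := by
    rw [← sqrt_one, ← sqrt_div' _ (by norm_num : (0 : ℝ) ≤ 3)]
    refine sqrt_le_sqrt ?_
    rw [div_le_div_iff₀ (by norm_num) (by linarith)]
    linarith
  have hexp : log T / 16 ≤ b ^ 2 / (2 * (t + T)) := by
    rw [le_div_iff₀ (by linarith)]
    nlinarith
  calc exp (log T / 16) / √3 = 1 / √3 * exp (log T / 16) := by ring
    _ ≤ √(T / (t + T)) * exp (b ^ 2 / (2 * (t + T))) := by gcongr
    _ = robbinsMixture T t b := rfl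

lemma exists_le_of_le_sSup_image_Ici {f : ℝ → ℝ} (hf : ContinuousOn f (Set.Ici 0)) {a b : ℝ}
    (htail : ∀ᶠ t in atTop, f t ≤ b) (hba : b < a) (ha : a ≤ sSup (f '' Set.Ici 0)) :
    ∃ t, 0 ≤ t ∧ a ≤ f t := by
  obtain ⟨T, hT⟩ := eventually_atTop.1 htail
  obtain ⟨t₀, ht₀, hmax⟩ := isCompact_Icc.exists_isMaxOn
    (Set.nonempty_Icc.2 (le_max_right T 0)) (hf.mono fun t ht => ht.1)
  have hsup : sSup (f '' Set.Ici 0) ≤ max (f t₀) b := by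
    refine csSup_le (Set.image_nonempty.2 Set.nonempty_Ici) ?_
    rintro _ ⟨t, ht, rfl⟩
    rcases le_or_gt t (max T 0) with htT | htT
    · exact le_max_of_le_left (hmax ⟨ht, htT⟩)
    · exact le_max_of_le_right (hT t (le_of_max_le_left htT.le))
  refine ⟨t₀, ht₀.1, ?_⟩
  rcases le_max_iff.1 (ha.trans hsup) with h | h
  · exact h
  · exact absurd h hba.not_ge

namespace IsStdBrownian

variable {Ω : Type*} [MeasurableSpace Ω] {P : Measure Ω} {B : ℝ → Ω → ℝ}

lemma map_eval (hB : IsStdBrownian P B) {t : ℝ} (ht : 0 ≤ t) :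
    P.map (B t) = gaussianReal 0 t.toNNReal := by
  obtain ⟨hB0, -, -, hBlaw, -⟩ := hB
  simpa [hB0] using hBlaw 0 t le_rfl ht

lemma lintegral_robbinsMixture (hB : IsStdBrownian P B) {c t : ℝ} (hc : 0 < c) (ht : 0 ≤ t) :
    ∫⁻ ω, ENNReal.ofReal (robbinsMixture c t (B t ω)) ∂P = 1 := by
  rw [← lintegral_map (f := fun x => ENNReal.ofReal (robbinsMixture c t x)) (by fun_prop)
    (hB.2.1 t), hB.map_eval ht]
  simpa [robbinsMixture_zero_zero hc] using
    lintegral_robbinsMixture_add_gaussianReal hc le_rfl ht 0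

noncomputable def sampledFiltration (hB : IsStdBrownian P B) (u : ℕ → ℝ) :
    Filtration ℕ ‹MeasurableSpace Ω› :=
  Filtration.natural (fun k => B (u k)) fun k => (hB.2.1 (u k)).stronglyMeasurable

lemma measurable_sampledFiltration (hB : IsStdBrownian P B) (u : ℕ → ℝ) (k : ℕ) :
    Measurable[hB.sampledFiltration u k] (B (u k)) :=
  (Filtration.stronglyAdapted_natural (fun k => (hB.2.1 (u k)).stronglyMeasurable) k).measurable

lemma indep_sampledFiltration (hB : IsStdBrownian P B) {u : ℕ → ℝ} (hu : Monotone u)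
    (hu0 : u 0 = 0) (k : ℕ) :
    Indep (hB.sampledFiltration u k)
      (MeasurableSpace.comap (fun ω => B (u (k + 1)) ω - B (u k) ω) inferInstance) P := by
  have ⟨hB0, hBm, _, _, hBind⟩ := hB
  set ξ : Fin (k + 1) → Ω → ℝ := fun i ω => B (u (i + 1)) ω - B (u i) ω
  have hξ : ∀ i, Measurable (ξ i) := fun i => (hBm _).sub (hBm _)
  have hindep := indep_iSup_of_disjoint (fun i => (hξ i).comap_le)
    (hBind (k + 1) u hu fun i => hu0 ▸ hu (Nat.zero_le i))
    (Set.disjoint_singleton_right.2 (by simp) : Disjoint (Set.Iio (Fin.last k)) {Fin.last k})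
  refine indep_of_indep_of_le hindep (iSup₂_le fun j hj => ?_) (le_iSup₂_of_le _ rfl le_rfl)
  have htelescope : B (u j) = fun ω => ∑ i ∈ Finset.range j, (B (u (i + 1)) ω - B (u i) ω) := by
    ext ω
    rw [Finset.sum_range_sub (fun i => B (u i) ω), hu0, hB0, sub_zero]
  refine Measurable.comap_le ?_
  change Measurable[⨆ i ∈ Set.Iio (Fin.last k), MeasurableSpace.comap (ξ i) inferInstance]
    (B (u j))
  rw [htelescope]
  refine Finset.measurable_sum _ fun i hi => ?_
  have hik : i < k := (Finset.mem_range.1 hi).trans_le hj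
  exact (comap_measurable (ξ ⟨i, by omega⟩)).mono
    (le_iSup₂_of_le (f := fun i (_ : i ∈ Set.Iio (Fin.last k)) => _) ⟨i, by omega⟩
      (by simpa [Fin.lt_def] using hik) le_rfl) le_rfl

variable [IsFiniteMeasure P]

lemma martingale_robbinsMixture (hB : IsStdBrownian P B) {c : ℝ} (hc : 0 < c)
    {u : ℕ → ℝ} (hu : Monotone u) (hu0 : u 0 = 0) :
    Martingale (fun k ω => robbinsMixture c (u k) (B (u k) ω)) (hB.sampledFiltration u) P := by
  have ⟨_, hBm, _, hBlaw, _⟩ := hB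
  have hu_nonneg : ∀ k, 0 ≤ u k := fun k => hu0 ▸ hu (Nat.zero_le k)
  have hadapted : StronglyAdapted (hB.sampledFiltration u)
      (fun k ω => robbinsMixture c (u k) (B (u k) ω)) := fun k =>
    ((measurable_robbinsMixture c (u k)).comp
      (hB.measurable_sampledFiltration u k)).stronglyMeasurable
  have hint : ∀ k, Integrable (fun ω => robbinsMixture c (u k) (B (u k) ω)) P := fun k =>
    ⟨(hadapted k).mono ((hB.sampledFiltration u).le k) |>.aestronglyMeasurable,
      (hasFiniteIntegral_iff_ofReal (ae_of_all _ fun _ => robbinsMixture_nonneg _ _ _)).2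
        (by rw [hB.lintegral_robbinsMixture hc (hu_nonneg k)]; exact ENNReal.one_lt_top)⟩
  refine martingale_of_setIntegral_eq_succ hadapted hint fun k s hs => ?_
  have hm := (hB.sampledFiltration u).le k
  have hΔ : Measurable fun ω => B (u (k + 1)) ω - B (u k) ω := (hBm _).sub (hBm _)
  rw [integral_eq_lintegral_of_nonneg_ae (ae_of_all _ fun _ => robbinsMixture_nonneg _ _ _)
      ((hint k).1.restrict),
    integral_eq_lintegral_of_nonneg_ae (ae_of_all _ fun _ => robbinsMixture_nonneg _ _ _)
      ((hint (k + 1)).1.restrict)]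
  congr 1
  calc ∫⁻ ω in s, ENNReal.ofReal (robbinsMixture c (u k) (B (u k) ω)) ∂P
      = ∫⁻ ω in s, ∫⁻ x, ENNReal.ofReal (robbinsMixture c (u (k + 1)) (B (u k) ω + x))
          ∂(P.map fun ω => B (u (k + 1)) ω - B (u k) ω) ∂P := by
        rw [hBlaw _ _ (hu_nonneg k) (hu k.le_succ)]
        simp_rw [lintegral_robbinsMixture_add_gaussianReal hc (hu_nonneg k) (hu k.le_succ)]
    _ = ∫⁻ ω in s, ENNReal.ofReal (robbinsMixture c (u (k + 1)) (B (u (k + 1)) ω)) ∂P := by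
        rw [← setLIntegral_comp_add_of_indep (hB.measurable_sampledFiltration u k) hΔ hm
          (g := fun x => ENNReal.ofReal (robbinsMixture c (u (k + 1)) x))
          (hB.indep_sampledFiltration hu hu0 k) (by fun_prop) hs]
        simp

lemma measure_exists_le_robbinsMixture_sample_le (hB : IsStdBrownian P B)
    {c : ℝ} (hc : 0 < c) {u : ℕ → ℝ} (hu : Monotone u) (hu0 : u 0 = 0) {lam : ℝ} (hlam : 0 < lam)
    (n : ℕ) :
    P {ω | ∃ k ≤ n, lam ≤ robbinsMixture c (u k) (B (u k) ω)} ≤ ENNReal.ofReal lam⁻¹ := by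
  have hmart := hB.martingale_robbinsMixture hc hu hu0
  have hmax := maximal_ineq hmart.submartingale
    (fun k ω => robbinsMixture_nonneg c (u k) (B (u k) ω)) (ε := lam.toNNReal) n
  have hset : {ω | ∃ k ≤ n, lam ≤ robbinsMixture c (u k) (B (u k) ω)}
      = {ω | (lam.toNNReal : ℝ) ≤ (Finset.range (n + 1)).sup' Finset.nonempty_range_add_one
          fun k => robbinsMixture c (u k) (B (u k) ω)} := by
    ext ω
    simp [Finset.le_sup'_iff, hlam.le]
  have hint : ∫ ω, robbinsMixture c (u n) (B (u n) ω) ∂P = 1 := by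
    rw [integral_eq_lintegral_of_nonneg_ae (ae_of_all _ fun _ => robbinsMixture_nonneg _ _ _)
      (hmart.integrable n).1, hB.lintegral_robbinsMixture hc (hu0 ▸ hu (Nat.zero_le n))]
    rfl
  rw [hset, ENNReal.ofReal_inv_of_pos hlam, ENNReal.le_inv_iff_mul_le, mul_comm]
  refine hmax.trans ?_
  rw [← ENNReal.ofReal_one, ← hint]
  exact ENNReal.ofReal_le_ofReal (setIntegral_le_integral (hmart.integrable n)
    (ae_of_all _ fun _ => robbinsMixture_nonneg _ _ _))

lemma measure_exists_lt_robbinsMixture_le (hB : IsStdBrownian P B) {c : ℝ} (hc : 0 < c)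
    {lam : ℝ} (hlam : 0 < lam) :
    P {ω | ∃ t, 0 ≤ t ∧ lam < robbinsMixture c t (B t ω)} ≤ ENNReal.ofReal lam⁻¹ := by
  set A : ℕ → Set Ω := fun n =>
    {ω | ∃ k : ℕ, k ≤ 4 ^ n ∧ lam ≤ robbinsMixture c (k / 2 ^ n) (B (k / 2 ^ n) ω)}
  have hA : ∀ n, P (A n) ≤ ENNReal.ofReal lam⁻¹ := fun n =>
    hB.measure_exists_le_robbinsMixture_sample_le hc (u := fun k : ℕ => k / 2 ^ n)
      (fun i j hij => by dsimp only; gcongr) (by simp) hlam _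
  have hA_mono : Monotone A := by
    refine monotone_nat_of_le_succ fun n ω ⟨k, hk, hω⟩ => ⟨2 * k, by rw [pow_succ]; omega, ?_⟩
    rwa [show ((2 * k : ℕ) : ℝ) / 2 ^ (n + 1) = k / 2 ^ n by push_cast; ring]
  have hcover : {ω | ∃ t, 0 ≤ t ∧ lam < robbinsMixture c t (B t ω)} ⊆ ⋃ n, A n := by
    rintro ω ⟨t, ht, hlt⟩
    obtain ⟨n, k, hk, hω⟩ := exists_dyadic_of_eventually ht
      ((continuousAt_robbinsMixture (hB.2.2.1 ω) (by linarith)).eventually (lt_mem_nhds hlt))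
    exact Set.mem_iUnion.2 ⟨n, k, hk, hω.le⟩
  calc _ ≤ P (⋃ n, A n) := measure_mono hcover
    _ = ⨆ n, P (A n) := hA_mono.measure_iUnion
    _ ≤ _ := iSup_le hA

lemma measure_exists_le_robbinsMixture_le (hB : IsStdBrownian P B) {c : ℝ} (hc : 0 < c)
    {lam : ℝ} (hlam : 0 < lam) :
    P {ω | ∃ t, 0 ≤ t ∧ lam ≤ robbinsMixture c t (B t ω)} ≤ ENNReal.ofReal lam⁻¹ := by
  have hlim : Tendsto (fun l : ℝ => ENNReal.ofReal l⁻¹) (𝓝[<] lam) (𝓝 (ENNReal.ofReal lam⁻¹)) :=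
    ((ENNReal.continuous_ofReal.tendsto _).comp
      ((continuousAt_inv₀ hlam.ne').tendsto)).mono_left nhdsWithin_le_nhds
  refine ge_of_tendsto hlim ?_
  filter_upwards [Ioo_mem_nhdsLT hlam] with l hl
  have hsub : {ω | ∃ t, 0 ≤ t ∧ lam ≤ robbinsMixture c t (B t ω)}
      ⊆ {ω | ∃ t, 0 ≤ t ∧ l < robbinsMixture c t (B t ω)} :=
    fun ω ⟨t, ht, hω⟩ => ⟨t, ht, hl.2.trans_le hω⟩
  exact (measure_mono hsub).trans (hB.measure_exists_lt_robbinsMixture_le hc hl.1)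

/-- Borel–Cantelli over the blocks `[2 ^ n, 2 ^ (n + 1)]`, with the mixture of scale `c = 2 ^ n`
on the `n`-th block. -/
lemma ae_eventually_abs_div_sqrt_le_half (hB : IsStdBrownian P B) {y : ℝ} (hy : 0 ≤ y) :
    ∀ᵐ ω ∂P, ∀ᶠ t in atTop, |B t ω| / √((t + 1) * (log (t + 1) + 2 * y)) ≤ 1 / 2 := by
  set G : ℕ → Set Ω := fun n => {ω | ∃ t ∈ Set.Icc ((2 : ℝ) ^ n) (2 ^ (n + 1)),
    1 / 2 < |B t ω| / √((t + 1) * (log (t + 1) + 2 * y))}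
  set r : ℝ := exp (-(log 2 / 16))
  have hG : ∀ n, P (G n) ≤ ENNReal.ofReal √3 * ENNReal.ofReal r ^ n := by
    intro n
    have hT : (1 : ℝ) ≤ 2 ^ n := one_le_pow₀ one_le_two
    have hsub : G n ⊆ {ω | ∃ t, 0 ≤ t ∧
        exp (log (2 ^ n) / 16) / √3 ≤ robbinsMixture (2 ^ n) t (B t ω)} := by
      rintro ω ⟨t, ⟨ht1, ht2⟩, hω⟩
      refine ⟨t, by linarith, exp_div_sqrt_three_le_robbinsMixture hT ht1 (by rwa [← pow_succ'])
        hy ?_⟩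
      have := sq_mul_le_sq_of_le_abs_div_sqrt (by norm_num) hω.le
      linarith
    refine (measure_mono hsub).trans ((hB.measure_exists_le_robbinsMixture_le (by positivity)
      (by positivity)).trans_eq ?_)
    rw [← ENNReal.ofReal_pow (exp_nonneg _), ← ENNReal.ofReal_mul (sqrt_nonneg _), inv_div,
      div_eq_mul_inv, ← exp_neg, log_pow, ← exp_nat_mul]
    ring_nf
  have hr : ENNReal.ofReal r < 1 := by
    rw [ENNReal.ofReal_lt_one, exp_lt_one_iff, neg_lt_zero]
    exact div_pos (log_pos one_lt_two) (by norm_num)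
  have hsum : ∑' n, P (G n) ≠ ⊤ := by
    refine ne_top_of_le_ne_top ?_ (ENNReal.tsum_le_tsum hG)
    rw [ENNReal.tsum_mul_left, ENNReal.tsum_geometric]
    exact ENNReal.mul_ne_top ENNReal.ofReal_ne_top (ENNReal.inv_ne_top.2 (tsub_pos_of_lt hr).ne')
  filter_upwards [ae_eventually_notMem hsum] with ω hω
  obtain ⟨N, hN⟩ := eventually_atTop.1 hω
  filter_upwards [eventually_ge_atTop ((2 : ℝ) ^ N)] with t ht
  obtain ⟨n, hn1, hn2⟩ := exists_nat_pow_near ((one_le_pow₀ one_le_two).trans ht) one_lt_two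
  have hNn : N ≤ n := Nat.lt_succ_iff.1 ((pow_lt_pow_iff_right₀ one_lt_two).1 (ht.trans_lt hn2))
  exact not_lt.1 fun h => hN n hNn ⟨t, ⟨hn1, hn2.le⟩, h⟩

end IsStdBrownian

/-- **Robbins–Siegmund boundary crossing inequality.** For a
standard Brownian motion and all `y > 0`,
`P(sup_{t≥0} |B_t| / √((t+1)(log(t+1)+2y)) ≥ 1) ≤ e^{-y}`. -/
theorem robbins_siegmund {Ω : Type*} [MeasurableSpace Ω]
    (P : Measure Ω) [IsProbabilityMeasure P]
    (B : ℝ → Ω → ℝ) (hB : IsStdBrownian P B)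
    (y : ℝ) (hy : 0 < y) :
    P {ω | 1 ≤ sSup ((fun t => |B t ω| /
          Real.sqrt ((t + 1) * (Real.log (t + 1) + 2 * y))) '' Set.Ici 0)} ≤
      ENNReal.ofReal (Real.exp (-y)) := by
  have hcont : ∀ ω, ContinuousOn (fun t => |B t ω| /
      √((t + 1) * (log (t + 1) + 2 * y))) (Set.Ici 0) := by
    intro ω
    refine ContinuousOn.div ((hB.2.2.1 ω).abs.continuousOn) ?_ fun t (ht : 0 ≤ t) => ?_
    · fun_prop (disch := exact fun t (ht : 0 ≤ t) => by positivity)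
    · have : 0 ≤ log (t + 1) := log_nonneg (by linarith)
      positivity
  have hcross : {ω | 1 ≤ sSup ((fun t => |B t ω| /
      √((t + 1) * (log (t + 1) + 2 * y))) '' Set.Ici 0)}
      ≤ᵐ[P] {ω | ∃ t, 0 ≤ t ∧ exp y ≤ robbinsMixture 1 t (B t ω)} := by
    filter_upwards [hB.ae_eventually_abs_div_sqrt_le_half hy.le] with ω htail hω
    obtain ⟨t, ht, h1⟩ := exists_le_of_le_sSup_image_Ici (hcont ω) htail (by norm_num) hω
    exact ⟨t, ht, exp_le_robbinsMixture_one ht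
      (by simpa using sq_mul_le_sq_of_le_abs_div_sqrt zero_le_one h1)⟩
  calc _ ≤ P {ω | ∃ t, 0 ≤ t ∧ exp y ≤ robbinsMixture 1 t (B t ω)} := measure_mono_ae hcross
    _ ≤ ENNReal.ofReal (exp y)⁻¹ := hB.measure_exists_le_robbinsMixture_le one_pos (exp_pos y)
    _ = ENNReal.ofReal (exp (-y)) := by rw [exp_neg]
end

section
/- Let J be finite, γ^j > 0 for all j ∈ J, θ > 0, γ_min = min_j γ^j, U = θ/γ_min + 1, and α ∈ (0,1). For each j let (W^{j,n}_t)_{t≥0} = nγ^j t + √(nγ^j) B^j_t with (B^j) independent standard Brownian motions, and define τ^j_n = inf{u ≥ 0 : W^{j,n}_u ≥ nθ}. If n ≥ (2/γ_min)(θ/γ_min + 1) log(10|J|/α), then with probability at least 1 - α, for every j ∈ J: τ^j_n < ∞ and |τ^j_n - θ/γ^j| ≤ √((2/(nγ_min))(θ/γ_min + 1) log(10|J|/α)). -/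
/-!
Let `ε` be the square root in the conclusion and `U = θ / γ_min + 1`. If `|B^j| ≤ √(nγ^j) ε` on
`[0, U]`, then `W^j` stays within `nγ^j ε` of its drift `nγ^j t` there, which traps its hitting
time of `nθ` in `[θ/γ^j - ε, θ/γ^j + ε]`; this needs `θ/γ^j + ε ≤ U`, i.e. `ε ≤ 1`, which the
bound on `n` provides. By path continuity the supremum of `|B|` over `[0, U]` is the increasing
limit of maxima over dyadic grids, and on each grid Lévy's reflection inequality
`P(max_{k ≤ N} S_k ≥ x) ≤ 2 P(S_N ≥ x)` together with the Gaussian tail gives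
`P(sup_{[0,U]} |B| > x) ≤ 4 exp(-x² / 2U)`. For `x = √(nγ^j) ε` this is at most `α / |J|`, and
a union bound over `J` concludes.
-/

open MeasureTheory ProbabilityTheory Real
open Filter Topology
open scoped ENNReal NNReal

lemma inv_two_le_gaussianReal_Ici_zero (v : ℝ≥0) : 2⁻¹ ≤ gaussianReal 0 v (Set.Ici 0) := by
  have hsymm : gaussianReal 0 v (Set.Iic 0) = gaussianReal 0 v (Set.Ici 0) := by
    conv_lhs => rw [← neg_zero, ← gaussianReal_map_neg,
      Measure.map_apply measurable_neg measurableSet_Iic]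
    simp
  have hcover : 1 ≤ gaussianReal 0 v (Set.Ici 0) + gaussianReal 0 v (Set.Iic 0) := by
    rw [← measure_univ (μ := gaussianReal 0 v), ← Set.Ici_union_Iic (a := (0 : ℝ))]
    exact measure_union_le _ _
  rw [hsymm, ← two_mul] at hcover
  rw [ENNReal.inv_le_iff_le_mul (by simp) (by simp)]
  exact hcover

lemma gaussianReal_Ici_le_exp (v : ℝ≥0) {x : ℝ} (hx : 0 ≤ x) :
    gaussianReal 0 v (Set.Ici x) ≤ ENNReal.ofReal (exp (-x ^ 2 / (2 * v))) := by
  have hsub : HasSubgaussianMGF id v (gaussianReal 0 v) :=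
    ⟨integrable_exp_mul_gaussianReal, fun t => by simp [mgf_id_gaussianReal]⟩
  rw [← ofReal_measureReal]
  exact ENNReal.ofReal_le_ofReal (hsub.measure_ge_le hx)

section Levy

open Function

variable {Ω : Type*} {S : ℕ → Ω → ℝ} {x : ℝ}

def firstPassage (S : ℕ → Ω → ℝ) (x : ℝ) (k : ℕ) : Set Ω :=
  {ω | x ≤ S k ω ∧ ∀ i < k, S i ω < x}

lemma exists_measurableSet_preimage_eq_firstPassage [MeasurableSpace Ω] (k : ℕ) :
    ∃ A : Set (Fin (k + 1) → ℝ), MeasurableSet A ∧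
      (fun ω (i : Fin (k + 1)) => S i ω) ⁻¹' A = firstPassage S x k := by
  refine ⟨{v | x ≤ v (Fin.last k) ∧ ∀ i : Fin k, v i.castSucc < x}, by measurability, ?_⟩
  ext ω
  simp [firstPassage, Fin.forall_iff]

lemma measurableSet_firstPassage [MeasurableSpace Ω] (hS : ∀ k, Measurable (S k)) (k : ℕ) :
    MeasurableSet (firstPassage S x k) := by
  obtain ⟨A, hA, hpre⟩ := exists_measurableSet_preimage_eq_firstPassage (S := S) (x := x) k
  exact hpre ▸ measurable_pi_lambda (fun ω (i : Fin (k + 1)) => S i ω) (fun i => hS i) hA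

lemma pairwise_disjoint_firstPassage : Pairwise (Disjoint on firstPassage S x) := by
  refine pairwise_disjoint_on _ |>.2 fun a b hab => Set.disjoint_left.2 fun ω ha hb => ?_
  exact (hb.2 a hab).not_ge ha.1

lemma biUnion_firstPassage (m : ℕ) :
    ⋃ k ∈ Finset.range (m + 1), firstPassage S x k = {ω | ∃ k ≤ m, x ≤ S k ω} := by
  ext ω
  simp only [firstPassage, Set.mem_iUnion, Finset.mem_range, Nat.lt_succ_iff]
  refine ⟨fun ⟨k, hk, hxk, _⟩ => ⟨k, hk, hxk⟩, fun ⟨k, hk, hxk⟩ => ?_⟩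
  have hex : ∃ j, x ≤ S j ω := ⟨k, hxk⟩
  exact ⟨Nat.find hex, (Nat.find_le hxk).trans hk, Nat.find_spec hex,
    fun i hi => not_le.1 (Nat.find_min hex hi)⟩

lemma levy_maximal_inequality [MeasurableSpace Ω] {P : Measure Ω} (hS : ∀ k, Measurable (S k))
    (m : ℕ) (hhalf : ∀ k ≤ m, 2⁻¹ ≤ P {ω | 0 ≤ S m ω - S k ω})
    (hindep : ∀ k ≤ m,
      IndepFun (fun ω (i : Fin (k + 1)) => S i ω) (fun ω => S m ω - S k ω) P) :
    P {ω | ∃ k ≤ m, x ≤ S k ω} ≤ 2 * P {ω | x ≤ S m ω} := by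
  set F : ℕ → Set Ω := fun k => {ω | 0 ≤ S m ω - S k ω}
  have hF : ∀ k, MeasurableSet (F k) := fun k =>
    measurableSet_le measurable_const ((hS m).sub (hS k))
  have hdisj : Set.PairwiseDisjoint ↑(Finset.range (m + 1)) (firstPassage S x) :=
    fun a _ b _ hab => pairwise_disjoint_firstPassage hab
  have hstep : ∀ k ∈ Finset.range (m + 1),
      P (firstPassage S x k) ≤ 2 * P (firstPassage S x k ∩ F k) := by
    intro k hk
    replace hk := Nat.lt_succ_iff.1 (Finset.mem_range.1 hk)
    obtain ⟨A, hA, hpre⟩ := exists_measurableSet_preimage_eq_firstPassage (S := S) (x := x) k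
    have hmul := (hindep k hk).measure_inter_preimage_eq_mul A (Set.Ici 0) hA measurableSet_Ici
    rw [hpre] at hmul
    change P (firstPassage S x k ∩ F k) = P (firstPassage S x k) * P (F k) at hmul
    calc P (firstPassage S x k) = 2 * (2⁻¹ * P (firstPassage S x k)) := by
          rw [← mul_assoc, ENNReal.mul_inv_cancel two_ne_zero ENNReal.ofNat_ne_top, one_mul]
      _ ≤ 2 * (P (firstPassage S x k) * P (F k)) := by
          rw [mul_comm 2⁻¹]
          gcongr
          exact hhalf k hk
      _ = 2 * P (firstPassage S x k ∩ F k) := by rw [hmul]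
  calc P {ω | ∃ k ≤ m, x ≤ S k ω}
      = ∑ k ∈ Finset.range (m + 1), P (firstPassage S x k) := by
        rw [← biUnion_firstPassage, measure_biUnion_finset hdisj
          fun k _ => measurableSet_firstPassage hS k]
    _ ≤ ∑ k ∈ Finset.range (m + 1), 2 * P (firstPassage S x k ∩ F k) :=
        Finset.sum_le_sum hstep
    _ = 2 * P (⋃ k ∈ Finset.range (m + 1), firstPassage S x k ∩ F k) := by
        rw [← Finset.mul_sum, measure_biUnion_finset
          (hdisj.mono fun k => Set.inter_subset_left)
          fun k _ => (measurableSet_firstPassage hS k).inter (hF k)]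
    _ ≤ 2 * P {ω | x ≤ S m ω} := by
        gcongr
        refine Set.iUnion₂_subset fun k _ ω ⟨hk, hm⟩ => ?_
        have : 0 ≤ S m ω - S k ω := hm
        exact hk.1.trans (by linarith)

end Levy

section RandomWalk

variable {Ω : Type*} {S : ℕ → Ω → ℝ}

lemma sum_increments_eq (hS0 : ∀ ω, S 0 ω = 0) {N c : ℕ} (hc : c ≤ N) (ω : Ω) :
    ∑ i ∈ Finset.univ.filter (fun i : Fin N => (i : ℕ) < c), (S (i + 1) ω - S i ω) = S c ω := by
  rw [Finset.sum_filter,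
    Fin.sum_univ_eq_sum_range (fun i => if i < c then S (i + 1) ω - S i ω else 0),
    ← Finset.sum_range_add_sum_Ico _ hc,
    Finset.sum_congr rfl fun i hi => if_pos (Finset.mem_range.1 hi),
    Finset.sum_eq_zero fun i hi => if_neg (Finset.mem_Ico.1 hi).1.not_gt,
    add_zero, Finset.sum_range_sub (fun i => S i ω), hS0, sub_zero]

lemma indepFun_prefix_increment [MeasurableSpace Ω] {P : Measure Ω} (hS0 : ∀ ω, S 0 ω = 0)
    (hS : ∀ k, Measurable (S k)) {N : ℕ}
    (hindep : iIndepFun (fun (i : Fin N) ω => S (i + 1) ω - S i ω) P) {k : ℕ} (hk : k ≤ N) :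
    IndepFun (fun ω (i : Fin (k + 1)) => S i ω) (fun ω => S N ω - S k ω) P := by
  set D : Fin N → Ω → ℝ := fun i ω => S (i + 1) ω - S i ω
  set I : Finset (Fin N) := {i | (i : ℕ) < k}
  set I' : Finset (Fin N) := {i | ¬ (i : ℕ) < k}
  have hcomp := (hindep.indepFun_finset I I' (Finset.disjoint_filter_filter_not _ _ _)
    fun i => (hS _).sub (hS _)).comp
    (φ := fun v (j : Fin (k + 1)) => ∑ i ∈ Finset.univ.filter (fun i : I => (i : ℕ) < j), v i)
    (ψ := fun w => ∑ i : I', w i) (by fun_prop) (by fun_prop)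
  convert hcomp using 1
  · ext ω j
    simp only [Function.comp_apply]
    rw [Finset.sum_filter, Finset.sum_coe_sort I (fun i => if (i : ℕ) < j then D i ω else 0),
      ← Finset.sum_filter, Finset.filter_filter]
    have hj : (j : ℕ) ≤ k := Nat.lt_succ_iff.1 j.isLt
    have hfilter : Finset.univ.filter (fun i : Fin N => (i : ℕ) < k ∧ (i : ℕ) < j) =
        Finset.univ.filter (fun i : Fin N => (i : ℕ) < j) := by
      ext i; simp only [Finset.mem_filter, Finset.mem_univ, true_and]; omega
    rw [hfilter, sum_increments_eq hS0 (hj.trans hk)]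
  · ext ω
    simp only [Function.comp_apply]
    have hsplit := Finset.sum_filter_add_sum_filter_not Finset.univ
      (fun i : Fin N => (i : ℕ) < k) (fun i => D i ω)
    have htotal := sum_increments_eq hS0 (le_refl N) ω
    rw [Finset.filter_true_of_mem fun i _ => i.isLt] at htotal
    rw [Finset.sum_coe_sort I' (fun i => D i ω), ← sum_increments_eq hS0 hk ω, ← htotal]
    exact (eq_sub_of_add_eq' hsplit).symm

end RandomWalk

lemma Icc_subset_closure_dyadic {U : ℝ} (hU : 0 < U) :
    Set.Icc 0 U ⊆ closure {t | ∃ M k : ℕ, k ≤ 2 ^ M ∧ k * (U / 2 ^ M) = t} := by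
  intro t ht
  set a : ℕ → ℝ := fun M => t * 2 ^ M / U
  have ha : ∀ M, t = a M * (U / 2 ^ M) := fun M => by simp only [a]; field_simp
  have ha0 : ∀ M, 0 ≤ a M := fun M => div_nonneg (mul_nonneg ht.1 (by positivity)) hU.le
  set q : ℕ → ℝ := fun M => ⌊a M⌋₊ * (U / 2 ^ M)
  have hq_mem : ∀ M, q M ∈ {t | ∃ M k : ℕ, k ≤ 2 ^ M ∧ k * (U / 2 ^ M) = t} := by
    refine fun M => ⟨M, ⌊a M⌋₊, Nat.floor_le_of_le ?_, rfl⟩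
    rw [div_le_iff₀ hU]
    push_cast
    nlinarith [ht.2, pow_pos (two_pos : (0 : ℝ) < 2) M]
  have hq_le : ∀ M, q M ≤ t := fun M => by
    rw [ha M]; simp only [q]; gcongr; exact Nat.floor_le (ha0 M)
  have hq_gt : ∀ M, t - U / 2 ^ M ≤ q M := fun M => by
    have := (Nat.lt_floor_add_one (a M)).le
    rw [ha M, sub_le_iff_le_add]
    calc a M * (U / 2 ^ M) ≤ (⌊a M⌋₊ + 1) * (U / 2 ^ M) := by gcongr
      _ = q M + U / 2 ^ M := by ring
  have hlower : Tendsto (fun M : ℕ => t - U / 2 ^ M) atTop (𝓝 t) := by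
    simpa using tendsto_const_nhds.sub <| tendsto_const_nhds.div_atTop <|
      tendsto_pow_atTop_atTop_of_one_lt (one_lt_two : (1 : ℝ) < 2)
  exact mem_closure_of_tendsto
    (tendsto_of_tendsto_of_tendsto_of_le_of_le hlower tendsto_const_nhds hq_gt hq_le)
    (Eventually.of_forall hq_mem)

lemma exists_dyadic_lt_abs {f : ℝ → ℝ} (hf : Continuous f) {U x t : ℝ} (hU : 0 < U)
    (ht : t ∈ Set.Icc 0 U) (hxt : x < |f t|) :
    ∃ M k : ℕ, k ≤ 2 ^ M ∧ x < |f (k * (U / 2 ^ M))| := by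
  by_contra! h
  have hdyadic : {t | ∃ M k : ℕ, k ≤ 2 ^ M ∧ k * (U / 2 ^ M) = t} ⊆ {t | |f t| ≤ x} := by
    rintro s ⟨M, k, hk, rfl⟩
    exact h M k hk
  have hclosed : IsClosed {t | |f t| ≤ x} := isClosed_le (by fun_prop) continuous_const
  exact hxt.not_ge (closure_minimal hdyadic hclosed (Icc_subset_closure_dyadic hU ht))

lemma abs_sInf_hittingSet_sub_le {w : ℝ → ℝ} {c a ε U : ℝ} (hc : 0 < c) (ha : 0 ≤ a)
    (hε : 0 ≤ ε) (haU : a + ε ≤ U) (hw : ∀ t ∈ Set.Icc 0 U, |w t - c * t| ≤ c * ε) :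
    (∃ u, 0 ≤ u ∧ c * a ≤ w u) ∧ |sInf {u | 0 ≤ u ∧ c * a ≤ w u} - a| ≤ ε := by
  have hhit : a + ε ∈ {u | 0 ≤ u ∧ c * a ≤ w u} := by
    refine ⟨by linarith, ?_⟩
    have := (abs_le.1 (hw (a + ε) ⟨by linarith, haU⟩)).1
    nlinarith
  have hlow : ∀ u ∈ {u | 0 ≤ u ∧ c * a ≤ w u}, a - ε ≤ u := by
    rintro u ⟨hu0, hu⟩
    by_contra! hlt
    have := (abs_le.1 (hw u ⟨hu0, by linarith⟩)).2
    nlinarith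
  refine ⟨⟨_, hhit⟩, abs_le.2 ⟨?_, ?_⟩⟩
  · linarith [le_csInf ⟨_, hhit⟩ hlow]
  · linarith [csInf_le ⟨_, hlow⟩ hhit]

lemma one_sub_card_mul_le_measure_forall {Ω ι : Type*} [MeasurableSpace Ω] {P : Measure Ω}
    [IsProbabilityMeasure P] [Fintype ι] {p : ι → Ω → Prop} {δ : ℝ≥0∞}
    (h : ∀ i, P {ω | ¬ p i ω} ≤ δ) :
    1 - Fintype.card ι * δ ≤ P {ω | ∀ i, p i ω} := by
  have hcompl : {ω | ∀ i, p i ω}ᶜ = ⋃ i, {ω | ¬ p i ω} := by ext; simp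
  calc 1 - Fintype.card ι * δ ≤ 1 - P {ω | ∀ i, p i ω}ᶜ := by
        gcongr
        calc P {ω | ∀ i, p i ω}ᶜ ≤ ∑ i, P {ω | ¬ p i ω} := hcompl ▸ measure_iUnion_fintype_le _ _
          _ ≤ ∑ _ : ι, δ := Finset.sum_le_sum fun i _ => h i
          _ = Fintype.card ι * δ := by simp
    _ ≤ P {ω | ∀ i, p i ω} := by
        rw [tsub_le_iff_right, ← measure_univ (μ := P)]
        exact measure_univ_le_add_compl _

namespace IsStdBrownian

variable {Ω : Type*} [MeasurableSpace Ω] {P : Measure Ω} {B : ℝ → Ω → ℝ}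

lemma neg (hB : IsStdBrownian P B) : IsStdBrownian P (fun t ω => -B t ω) := by
  obtain ⟨h0, hmeas, hcont, hlaw, hindep⟩ := hB
  refine ⟨fun ω => by simp [h0], fun t => (hmeas t).neg, fun ω => (hcont ω).neg,
    fun s t hs hst => ?_, fun n ts hts hts0 => ?_⟩
  · have hcomp : (fun ω => -B t ω - -B s ω) = (fun y => -y) ∘ fun ω => B t ω - B s ω := by
      ext ω; simp only [Function.comp_apply]; ring
    rw [hcomp, ← Measure.map_map measurable_neg (by fun_prop), hlaw s t hs hst,
      gaussianReal_map_neg, neg_zero]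
  · convert (hindep n ts hts hts0).comp (fun _ y => -y) fun _ => measurable_neg using 1
    ext i ω
    simp only [Function.comp_apply]
    ring

lemma measure_sub_preimage (hB : IsStdBrownian P B) {s t : ℝ} (hs : 0 ≤ s) (hst : s ≤ t)
    {A : Set ℝ} (hA : MeasurableSet A) :
    P ((fun ω => B t ω - B s ω) ⁻¹' A) = gaussianReal 0 (t - s).toNNReal A := by
  obtain ⟨-, hmeas, -, hlaw, -⟩ := hB
  rw [← Measure.map_apply (by fun_prop) hA, hlaw s t hs hst]

lemma measure_ge_le_exp (hB : IsStdBrownian P B) {t x : ℝ} (ht : 0 ≤ t) (hx : 0 ≤ x) :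
    P {ω | x ≤ B t ω} ≤ ENNReal.ofReal (exp (-x ^ 2 / (2 * t))) := by
  have hlaw := hB.measure_sub_preimage le_rfl ht (measurableSet_Ici (a := x))
  obtain ⟨h0, -⟩ := hB
  simp only [h0, sub_zero] at hlaw
  calc P {ω | x ≤ B t ω} = gaussianReal 0 t.toNNReal (Set.Ici x) := hlaw
    _ ≤ ENNReal.ofReal (exp (-x ^ 2 / (2 * t))) := by
        simpa only [Real.coe_toNNReal t ht] using gaussianReal_Ici_le_exp t.toNNReal hx

lemma measure_exists_ge_le_two_mul (hB : IsStdBrownian P B) {ts : ℕ → ℝ} (hts : Monotone ts)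
    (hts0 : ts 0 = 0) (x : ℝ) (N : ℕ) :
    P {ω | ∃ k ≤ N, x ≤ B (ts k) ω} ≤ 2 * P {ω | x ≤ B (ts N) ω} := by
  obtain ⟨h0, hmeas, -, -, hindep⟩ := id hB
  have hts_nonneg : ∀ k, 0 ≤ ts k := fun k => hts0 ▸ hts (Nat.zero_le k)
  have hS0 : ∀ ω, B (ts 0) ω = 0 := fun ω => by rw [hts0, h0]
  refine levy_maximal_inequality (fun k => hmeas _) N (fun k hk => ?_) fun k hk =>
    indepFun_prefix_increment hS0 (fun k => hmeas _) (hindep N ts hts hts_nonneg) hk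
  calc 2⁻¹ ≤ gaussianReal 0 (ts N - ts k).toNNReal (Set.Ici 0) :=
        inv_two_le_gaussianReal_Ici_zero _
    _ = P {ω | 0 ≤ B (ts N) ω - B (ts k) ω} :=
        (hB.measure_sub_preimage (hts_nonneg k) (hts hk) measurableSet_Ici).symm

lemma measure_exists_grid_ge_le (hB : IsStdBrownian P B) {U x : ℝ} (hU : 0 < U) (hx : 0 ≤ x)
    {N : ℕ} (hN : 0 < N) :
    P {ω | ∃ k ≤ N, x ≤ B (k * (U / N)) ω} ≤ 2 * ENNReal.ofReal (exp (-x ^ 2 / (2 * U))) := by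
  set ts : ℕ → ℝ := fun k => (min k N : ℕ) * (U / N)
  have hts : Monotone ts := fun a b hab => by simp only [ts]; gcongr
  have hts_grid : ∀ k ≤ N, ts k = k * (U / N) := fun k hk => by simp only [ts, min_eq_left hk]
  have htsN : ts N = U := by rw [hts_grid N le_rfl]; field_simp
  have hevent : {ω | ∃ k ≤ N, x ≤ B (k * (U / N)) ω} = {ω | ∃ k ≤ N, x ≤ B (ts k) ω} := by
    ext ω
    exact exists_congr fun k => ⟨fun ⟨hk, h⟩ => ⟨hk, hts_grid k hk ▸ h⟩,
      fun ⟨hk, h⟩ => ⟨hk, hts_grid k hk ▸ h⟩⟩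
  calc P {ω | ∃ k ≤ N, x ≤ B (k * (U / N)) ω} ≤ 2 * P {ω | x ≤ B (ts N) ω} :=
        hevent ▸ hB.measure_exists_ge_le_two_mul hts (by simp [ts]) x N
    _ ≤ 2 * ENNReal.ofReal (exp (-x ^ 2 / (2 * U))) := by
        rw [htsN]
        gcongr
        exact hB.measure_ge_le_exp hU.le hx

lemma measure_exists_abs_gt_le (hB : IsStdBrownian P B) {U x : ℝ} (hU : 0 < U) (hx : 0 ≤ x) :
    P {ω | ∃ t ∈ Set.Icc 0 U, x < |B t ω|} ≤ 4 * ENNReal.ofReal (exp (-x ^ 2 / (2 * U))) := by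
  obtain ⟨-, -, hcont, -, -⟩ := id hB
  set e := ENNReal.ofReal (exp (-x ^ 2 / (2 * U)))
  set grid : ℕ → Set Ω := fun M => {ω | ∃ k : ℕ, k ≤ 2 ^ M ∧ x < |B (k * (U / 2 ^ M)) ω|}
  have hsub : {ω | ∃ t ∈ Set.Icc 0 U, x < |B t ω|} ⊆ ⋃ M, grid M := by
    rintro ω ⟨t, ht, hxt⟩
    obtain ⟨M, k, hk, h⟩ := exists_dyadic_lt_abs (hcont ω) hU ht hxt
    exact Set.mem_iUnion.2 ⟨M, k, hk, h⟩
  have hmono : Monotone grid := monotone_nat_of_le_succ fun M ω ⟨k, hk, h⟩ => by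
    refine ⟨2 * k, by rw [pow_succ]; omega, ?_⟩
    have hrefine : ((2 * k : ℕ) : ℝ) * (U / 2 ^ (M + 1)) = k * (U / 2 ^ M) := by
      push_cast; rw [pow_succ]; field_simp
    rwa [hrefine]
  have hgrid : ∀ M, P (grid M) ≤ 4 * e := by
    intro M
    have hsplit : grid M ⊆ {ω | ∃ k : ℕ, k ≤ 2 ^ M ∧ x ≤ B (k * (U / (2 ^ M : ℕ))) ω} ∪
        {ω | ∃ k : ℕ, k ≤ 2 ^ M ∧ x ≤ -B (k * (U / (2 ^ M : ℕ))) ω} := by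
      rintro ω ⟨k, hk, h⟩
      push_cast
      rcases le_abs'.1 h.le with h' | h'
      · exact Or.inr ⟨k, hk, by linarith⟩
      · exact Or.inl ⟨k, hk, h'⟩
    calc P (grid M) ≤ _ := (measure_mono hsplit).trans (measure_union_le _ _)
      _ ≤ 2 * e + 2 * e := add_le_add (hB.measure_exists_grid_ge_le hU hx (by positivity))
          (hB.neg.measure_exists_grid_ge_le hU hx (by positivity))
      _ = 4 * e := by ring
  calc P {ω | ∃ t ∈ Set.Icc 0 U, x < |B t ω|} ≤ P (⋃ M, grid M) := measure_mono hsub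
    _ = ⨆ M, P (grid M) := hmono.measure_iUnion
    _ ≤ 4 * e := iSup_le hgrid

lemma measure_hitting_far_le (hB : IsStdBrownian P B) {c a ε U : ℝ} (hc : 0 < c) (ha : 0 ≤ a)
    (hε : 0 < ε) (haU : a + ε ≤ U) :
    P {ω | ¬ ((∃ u, 0 ≤ u ∧ c * a ≤ c * u + √c * B u ω) ∧
        |sInf {u | 0 ≤ u ∧ c * a ≤ c * u + √c * B u ω} - a| ≤ ε)} ≤
      4 * ENNReal.ofReal (exp (-(c * ε ^ 2) / (2 * U))) := by
  have hsub : {ω | ¬ ((∃ u, 0 ≤ u ∧ c * a ≤ c * u + √c * B u ω) ∧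
      |sInf {u | 0 ≤ u ∧ c * a ≤ c * u + √c * B u ω} - a| ≤ ε)} ⊆
      {ω | ∃ t ∈ Set.Icc 0 U, √c * ε < |B t ω|} := by
    intro ω hfar
    by_contra hnear
    simp only [Set.mem_ofPred_eq, not_exists, not_and, not_lt] at hnear
    refine hfar (abs_sInf_hittingSet_sub_le hc ha hε.le haU fun t ht => ?_)
    rw [add_sub_cancel_left, abs_mul, abs_of_nonneg (sqrt_nonneg c)]
    calc √c * |B t ω| ≤ √c * (√c * ε) := by gcongr; exact hnear t ht
      _ = c * ε := by rw [← mul_assoc, mul_self_sqrt hc.le]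
  calc _ ≤ _ := measure_mono hsub
    _ ≤ 4 * ENNReal.ofReal (exp (-(√c * ε) ^ 2 / (2 * U))) :=
        hB.measure_exists_abs_gt_le (by linarith) (by positivity)
    _ = 4 * ENNReal.ofReal (exp (-(c * ε ^ 2) / (2 * U))) := by
        rw [mul_pow, sq_sqrt hc.le]

lemma measure_rescaled_hitting_far_le (hB : IsStdBrownian P B) {γ g θ α K n : ℝ}
    (hg : 0 < g) (hgγ : g ≤ γ) (hθ : 0 < θ) (hα : α ∈ Set.Ioo (0 : ℝ) 1) (hK : 1 ≤ K)
    (hn : 2 / g * (θ / g + 1) * log (10 * K / α) ≤ n) :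
    P {ω | ¬ ((∃ u, 0 ≤ u ∧ n * θ ≤ n * γ * u + √(n * γ) * B u ω) ∧
        |sInf {u | 0 ≤ u ∧ n * θ ≤ n * γ * u + √(n * γ) * B u ω} - θ / γ| ≤
          √(2 / (n * g) * (θ / g + 1) * log (10 * K / α)))} ≤ ENNReal.ofReal (α / K) := by
  obtain ⟨hα0, hα1⟩ := hα
  set U := θ / g + 1
  set L := log (10 * K / α)
  set ε := √(2 / (n * g) * U * L)
  have hγ : 0 < γ := hg.trans_le hgγ
  have hU : 0 < U := by positivity
  have hL : 0 < L := log_pos ((one_lt_div hα0).2 (by linarith))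
  have hn0 : 0 < n := lt_of_lt_of_le (by positivity) hn
  have hε2 : ε ^ 2 = 2 / (n * g) * U * L := sq_sqrt (by positivity)
  have hε1 : ε ≤ 1 := by
    refine sqrt_le_one.2 ?_
    rw [show 2 / (n * g) * U * L = 2 / g * U * L / n by field_simp, div_le_one hn0]
    exact hn
  have haU : θ / γ + ε ≤ U := by
    have := div_le_div_of_nonneg_left hθ.le hg hgγ
    linarith
  have hexp : exp (-(n * γ * ε ^ 2) / (2 * U)) ≤ α / (10 * K) := by
    have hL_le : L ≤ n * γ * ε ^ 2 / (2 * U) := by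
      rw [hε2, show n * γ * (2 / (n * g) * U * L) / (2 * U) = γ / g * L by field_simp]
      exact le_mul_of_one_le_left hL.le ((one_le_div hg).2 hgγ)
    calc exp (-(n * γ * ε ^ 2) / (2 * U)) ≤ exp (-L) := by
          rw [neg_div]; exact exp_le_exp.2 (neg_le_neg hL_le)
      _ = α / (10 * K) := by
          rw [exp_neg, exp_log (by positivity), inv_div]
  have hthreshold : n * θ = n * γ * (θ / γ) := by field_simp
  rw [hthreshold]
  calc _ ≤ 4 * ENNReal.ofReal (exp (-(n * γ * ε ^ 2) / (2 * U))) :=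
        hB.measure_hitting_far_le (by positivity) (by positivity)
          (sqrt_pos.2 (by positivity)) haU
    _ ≤ 4 * ENNReal.ofReal (α / (10 * K)) := by gcongr
    _ ≤ ENNReal.ofReal (α / K) := by
        rw [← ENNReal.ofReal_ofNat 4, ← ENNReal.ofReal_mul (by norm_num)]
        refine ENNReal.ofReal_le_ofReal ?_
        rw [show 4 * (α / (10 * K)) = 2 / 5 * (α / K) by field_simp; ring]
        have : 0 ≤ α / K := by positivity
        linarith

end IsStdBrownian

theorem brownian_hitting_times_general
    {Ω : Type*} [MeasurableSpace Ω] (P : Measure Ω) [IsProbabilityMeasure P]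
    (J : Type*) [Fintype J]
    (γ : J → ℝ) (hγ : ∀ j, 0 < γ j) (θ α : ℝ) (hθ : 0 < θ)
    (hα : α ∈ Set.Ioo (0 : ℝ) 1)
    (n : ℕ)
    (B : J → ℝ → Ω → ℝ) (hB : ∀ j, IsStdBrownian P (B j))
    (W : J → ℝ → Ω → ℝ)
    (hW : ∀ j t ω, W j t ω = (n : ℝ) * γ j * t + Real.sqrt ((n : ℝ) * γ j) * B j t ω)
    (hn : 2 / (⨅ k, γ k) * (θ / (⨅ k, γ k) + 1) *
        Real.log (10 * (Fintype.card J : ℝ) / α) ≤ (n : ℝ)) :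
    1 - ENNReal.ofReal α ≤
      P {ω | ∀ j,
          (∃ u : ℝ, 0 ≤ u ∧ (n : ℝ) * θ ≤ W j u ω) ∧
          |sInf {u : ℝ | 0 ≤ u ∧ (n : ℝ) * θ ≤ W j u ω} - θ / γ j| ≤
            Real.sqrt (2 / (n * (⨅ k, γ k)) * (θ / (⨅ k, γ k) + 1) *
              Real.log (10 * (Fintype.card J : ℝ) / α))} := by
  refine (tsub_le_tsub_left ENNReal.mul_div_le 1).trans
    (one_sub_card_mul_le_measure_forall fun j => ?_)
  have : Nonempty J := ⟨j⟩
  have hK : (1 : ℝ) ≤ Fintype.card J := by exact_mod_cast Fintype.card_pos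
  have hg : 0 < ⨅ k, γ k := by
    obtain ⟨j₀, hj₀⟩ := Finite.exists_min γ
    exact (hγ j₀).trans_le (le_ciInf hj₀)
  rw [← ENNReal.ofReal_natCast, ← ENNReal.ofReal_div_of_pos (by linarith)]
  simp_rw [hW]
  exact (hB j).measure_rescaled_hitting_far_le hg (ciInf_le (Set.finite_range γ).bddBelow j)
    hθ hα hK hn

/-- **hitting times of the rescaled drifted Brownian motions.** For
independent drifted Brownian motions `W^{j,n}_t = nγ^j t + √(nγ^j) B^j_t`, threshold
`nθ`, and `n ≥ (2/γ_min)(θ/γ_min + 1) log(10|J|/α)`, with probability at least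
`1 - α` every hitting time `τ^j_n = inf{u ≥ 0 : W^{j,n}_u ≥ nθ}` is finite and
satisfies `|τ^j_n - θ/γ^j| ≤ √((2/(nγ_min))(θ/γ_min + 1) log(10|J|/α))`. -/
theorem brownian_hitting_times
    {Ω : Type*} [MeasurableSpace Ω] (P : Measure Ω) [IsProbabilityMeasure P]
    (J : Type*) [Fintype J] [Nonempty J]
    (γ : J → ℝ) (hγ : ∀ j, 0 < γ j) (θ α : ℝ) (hθ : 0 < θ)
    (hα : α ∈ Set.Ioo (0 : ℝ) 1)
    (n : ℕ)
    (B : J → ℝ → Ω → ℝ) (hB : ∀ j, IsStdBrownian P (B j))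
    (hindep : iIndepFun (fun j ω => fun t => B j t ω) P)
    (W : J → ℝ → Ω → ℝ)
    (hW : ∀ j t ω, W j t ω = (n : ℝ) * γ j * t + Real.sqrt ((n : ℝ) * γ j) * B j t ω)
    (hn : 2 / (⨅ k, γ k) * (θ / (⨅ k, γ k) + 1) *
        Real.log (10 * (Fintype.card J : ℝ) / α) ≤ (n : ℝ)) :
    1 - ENNReal.ofReal α ≤
      P {ω | ∀ j,
          (∃ u : ℝ, 0 ≤ u ∧ (n : ℝ) * θ ≤ W j u ω) ∧
          |sInf {u : ℝ | 0 ≤ u ∧ (n : ℝ) * θ ≤ W j u ω} - θ / γ j| ≤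
            Real.sqrt (2 / (n * (⨅ k, γ k)) * (θ / (⨅ k, γ k) + 1) *
              Real.log (10 * (Fintype.card J : ℝ) / α))} :=
  brownian_hitting_times_general P J γ hγ θ α hθ hα n B hB W hW hn
end
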